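/- arXiv:1903.08706 — 6 statements merged into one kernel-verified Lean document; each statement's English description precedes it below -/
import Mathlib

section
/- Let D be a subordinator with infinite Lévy measure whose Laplace exponent ψ is regularly varying at ∞ with index β ∈ [0,1), and let E be its inverse subordinator. Fix λ > 0, t > 0 and r > 0. If r < 1/(1−β), then E[exp(λ E_t^r)] < ∞. -/
open MeasureTheory Filter Topology Set

open scoped ENNReal

/-!
Since `E_t > n` forces `D_n ≤ t`, the exponential moment is at most
`1 + Σₙ exp (λ (n + 1) ^ r) P(D_n ≤ t)`. The Chernoff bound gives
`P(D_n ≤ t) ≤ exp (t s - n ψ(s))` for every `s > 0`, so it suffices that `n ψ(s) - t s` beats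
`λ (n + 1) ^ r + n` for a suitable `s`. For `r ≤ 1` a fixed `s` works because `ψ → ∞` (the Lévy
measure is infinite). For `r > 1`, regular variation yields a Potter bound `ψ(s) ≥ C s ^ δ` for any
`δ < β`, and `s = n ^ a` works for suitable `a` exactly when `r < 1 / (1 - β)`.
-/

lemma one_sub_exp_neg_mul_le_max_mul_min (s : ℝ) {y : ℝ} (hy : 0 ≤ y) :
    1 - Real.exp (-(s * y)) ≤ max s 1 * min y 1 := by
  have hlin : 1 - Real.exp (-(s * y)) ≤ s * y := by linarith [Real.add_one_le_exp (-(s * y))]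
  have hone : 1 - Real.exp (-(s * y)) ≤ 1 := by linarith [Real.exp_pos (-(s * y))]
  rcases le_total y 1 with hy1 | hy1
  · rw [min_eq_left hy1]
    exact hlin.trans (mul_le_mul_of_nonneg_right (le_max_left s 1) hy)
  · rw [min_eq_right hy1, mul_one]
    exact hone.trans (le_max_right s 1)

lemma one_sub_exp_neg_mul_nonneg {s y : ℝ} (hs : 0 ≤ s) (hy : 0 ≤ y) :
    0 ≤ 1 - Real.exp (-(s * y)) :=
  sub_nonneg.2 (Real.exp_le_one_iff.2 (neg_nonpos.2 (mul_nonneg hs hy)))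

section LevyExponent

variable {ν : Measure ℝ} {ψ : ℝ → ℝ}

lemma integrableOn_one_sub_exp_neg_mul (hν : ∫⁻ y in Ioi 0, ENNReal.ofReal (min y 1) ∂ν < ∞)
    {s : ℝ} (hs : 0 ≤ s) : IntegrableOn (fun y => 1 - Real.exp (-(s * y))) (Ioi 0) ν := by
  have hmin : IntegrableOn (fun y : ℝ => min y 1) (Ioi 0) ν := by
    refine ⟨by fun_prop, (hasFiniteIntegral_iff_ofReal ?_).2 hν⟩
    filter_upwards [ae_restrict_mem measurableSet_Ioi] with y hy
    exact le_min (le_of_lt hy) zero_le_one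
  refine (hmin.const_mul (max s 1)).mono' (by fun_prop) ?_
  filter_upwards [ae_restrict_mem measurableSet_Ioi] with y hy
  rw [Real.norm_of_nonneg (one_sub_exp_neg_mul_nonneg hs (le_of_lt hy))]
  exact one_sub_exp_neg_mul_le_max_mul_min s (le_of_lt hy)

lemma monotoneOn_of_eq_integral_one_sub_exp
    (hν : ∫⁻ y in Ioi 0, ENNReal.ofReal (min y 1) ∂ν < ∞)
    (hψ : ∀ s, 0 < s → ψ s = ∫ y in Ioi 0, (1 - Real.exp (-(s * y))) ∂ν) :
    MonotoneOn ψ (Ioi 0) := by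
  intro s hs s' hs' hss'
  rw [hψ s hs, hψ s' hs']
  refine setIntegral_mono_on (integrableOn_one_sub_exp_neg_mul hν (le_of_lt hs))
    (integrableOn_one_sub_exp_neg_mul hν (le_of_lt hs')) measurableSet_Ioi fun y hy => ?_
  have hsy : s * y ≤ s' * y := mul_le_mul_of_nonneg_right hss' (le_of_lt hy)
  gcongr

lemma tendsto_atTop_of_eq_integral_one_sub_exp
    (hν : ∫⁻ y in Ioi 0, ENNReal.ofReal (min y 1) ∂ν < ∞) (hνinf : ν (Ioi 0) = ∞)
    (hψ : ∀ s, 0 < s → ψ s = ∫ y in Ioi 0, (1 - Real.exp (-(s * y))) ∂ν) :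
    Tendsto ψ atTop atTop := by
  have hlintegral : ∀ n : ℕ, ENNReal.ofReal (ψ (n + 1)) =
      ∫⁻ y in Ioi 0, ENNReal.ofReal (1 - Real.exp (-((n + 1) * y))) ∂ν := fun n => by
    rw [hψ _ (by positivity), ofReal_integral_eq_lintegral_ofReal
      (integrableOn_one_sub_exp_neg_mul hν (by positivity))]
    filter_upwards [ae_restrict_mem measurableSet_Ioi] with y hy
    exact one_sub_exp_neg_mul_nonneg (by positivity) (le_of_lt hy)
  -- monotone convergence: `1 - exp (-(n + 1) y) ↑ 1` on `y > 0`, and `ν (Ioi 0) = ∞`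
  have hseq : Tendsto (fun n : ℕ => ψ (n + 1)) atTop atTop := by
    rw [← ENNReal.tendsto_ofReal_nhds_top, funext hlintegral, ← hνinf, ← setLIntegral_one]
    refine lintegral_tendsto_of_tendsto_of_monotone (fun n => by fun_prop) ?_ ?_
    · filter_upwards [ae_restrict_mem measurableSet_Ioi] with y hy m n hmn
      have hmny : ((m : ℝ) + 1) * y ≤ (n + 1) * y := by gcongr; exact le_of_lt hy
      exact ENNReal.ofReal_le_ofReal (by gcongr)
    · filter_upwards [ae_restrict_mem measurableSet_Ioi] with y hy
      have hexp : Tendsto (fun n : ℕ => Real.exp (-((n + 1) * y))) atTop (𝓝 0) := by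
        refine Real.tendsto_exp_atBot.comp (tendsto_neg_atTop_atBot.comp ?_)
        exact (tendsto_natCast_atTop_atTop.atTop_add tendsto_const_nhds).atTop_mul_const hy
      simpa using ENNReal.tendsto_ofReal ((tendsto_const_nhds (x := (1 : ℝ))).sub hexp)
  rw [tendsto_atTop_atTop]
  intro M
  obtain ⟨n, hn⟩ := (tendsto_atTop.1 hseq M).exists
  exact ⟨n + 1, fun s hs => hn.trans (monotoneOn_of_eq_integral_one_sub_exp hν hψ
    (mem_Ioi.2 (by positivity)) (mem_Ioi.2 (lt_of_lt_of_le (by positivity) hs)) hs)⟩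

end LevyExponent

lemma exists_pos_eventually_mul_rpow_le_of_tendsto_div {f : ℝ → ℝ} {β δ : ℝ}
    (hf : MonotoneOn f (Ioi 0)) (hfpos : ∀ᶠ s in atTop, 0 < f s)
    (hf2 : Tendsto (fun s => f (2 * s) / f s) atTop (𝓝 (2 ^ β))) (hδ0 : 0 ≤ δ) (hδβ : δ < β) :
    ∃ C > 0, ∀ᶠ s in atTop, C * s ^ δ ≤ f s := by
  have h2δβ : (2 : ℝ) ^ δ < 2 ^ β := Real.rpow_lt_rpow_of_exponent_lt one_lt_two hδβ
  obtain ⟨S, hS⟩ := eventually_atTop.1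
    ((hf2.eventually (lt_mem_nhds h2δβ)).and (hfpos.and (eventually_gt_atTop 0)))
  have hSpos : 0 < S := (hS S le_rfl).2.2
  have hdouble : ∀ s, S ≤ s → 2 ^ δ * f s ≤ f (2 * s) := fun s hs => by
    obtain ⟨hratio, hfs, -⟩ := hS s hs
    exact (lt_div_iff₀ hfs).1 hratio |>.le
  set C := f S / (2 * S) ^ δ
  have hbase : ∀ s, S ≤ s → s ≤ 2 * S → C * s ^ δ ≤ f s := fun s hs hs2 => by
    calc C * s ^ δ ≤ C * (2 * S) ^ δ := by
          have hC : 0 ≤ C := div_nonneg (hS S le_rfl).2.1.le (by positivity)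
          gcongr
          linarith
      _ = f S := div_mul_cancel₀ _ (by positivity)
      _ ≤ f s := hf hSpos (hSpos.trans_le hs) hs
  have hdyadic : ∀ n : ℕ, ∀ s, S ≤ s → s ≤ 2 ^ n * S → C * s ^ δ ≤ f s := by
    intro n
    induction n with
    | zero => exact fun s hs hsn => hbase s hs (by linarith)
    | succ n ih =>
      intro s hs hsn
      by_cases hs2 : s ≤ 2 * S
      · exact hbase s hs hs2
      have hhalf : C * (s / 2) ^ δ ≤ f (s / 2) :=
        ih (s / 2) (by linarith) (by rw [pow_succ] at hsn; linarith)
      calc C * s ^ δ = 2 ^ δ * (C * (s / 2) ^ δ) := by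
            rw [Real.div_rpow (by linarith) zero_le_two]; field_simp
        _ ≤ 2 ^ δ * f (s / 2) := by gcongr
        _ ≤ f s := by simpa [mul_div_cancel₀] using hdouble (s / 2) (by linarith)
  refine ⟨C, div_pos (hS S le_rfl).2.1 (by positivity), eventually_atTop.2 ⟨S, fun s hs => ?_⟩⟩
  obtain ⟨n, hn⟩ := pow_unbounded_of_one_lt (s / S) one_lt_two
  exact hdyadic n s hs ((div_lt_iff₀ hSpos).1 hn).le

lemma eventually_mul_rpow_le_mul_rpow {e γ : ℝ} (h : e < γ) (K : ℝ) {C : ℝ} (hC : 0 < C) :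
    ∀ᶠ u in atTop, K * u ^ e ≤ C * u ^ γ := by
  filter_upwards [(tendsto_rpow_atTop (sub_pos.2 h)).eventually_ge_atTop (K / C),
    eventually_gt_atTop 0] with u hu hu0
  calc K * u ^ e ≤ C * u ^ (γ - e) * u ^ e := by
        gcongr
        exact (div_le_iff₀' hC).1 hu
    _ = C * u ^ γ := by rw [mul_assoc, ← Real.rpow_add hu0, sub_add_cancel]

section ChernoffExponent

variable {ψ : ℝ → ℝ} {r K : ℝ}

lemma eventually_exists_mul_rpow_add_le_mul_sub_mul_of_le_one (hψ : Tendsto ψ atTop atTop)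
    (hr1 : r ≤ 1) (hK : 0 ≤ K) (t : ℝ) :
    ∀ᶠ u in atTop, ∃ s > 0, K * u ^ r + u ≤ u * ψ s - t * s := by
  obtain ⟨s, hψs, hs⟩ := ((hψ.eventually_ge_atTop (K + 2)).and (eventually_gt_atTop 0)).exists
  filter_upwards [eventually_ge_atTop 1, eventually_ge_atTop (t * s)] with u hu1 hts
  refine ⟨s, hs, ?_⟩
  have hur : u ^ r ≤ u := by simpa using Real.rpow_le_rpow_of_exponent_le hu1 hr1
  have hψu : u * (K + 2) ≤ u * ψ s := mul_le_mul_of_nonneg_left hψs (by linarith)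
  nlinarith

-- For `r > 1` take `s = u ^ a`: a Potter bound `ψ s ≥ C s ^ δ` gives `u ψ(u ^ a) ≥ C u ^ γ`
-- with `γ = 1 + a δ`, and `a`, `δ` can be chosen so that `γ` exceeds `1`, `r` and `a`.
lemma eventually_exists_mul_rpow_add_le_mul_sub_mul_of_one_lt {β : ℝ}
    (hψmono : MonotoneOn ψ (Ioi 0)) (hψ : Tendsto ψ atTop atTop)
    (hψ2 : Tendsto (fun s => ψ (2 * s) / ψ s) atTop (𝓝 (2 ^ β))) (hβ1 : β < 1)
    (hr1 : 1 < r) (hrβ : r < 1 / (1 - β)) (K t : ℝ) :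
    ∀ᶠ u in atTop, ∃ s > 0, K * u ^ r + u ≤ u * ψ s - t * s := by
  have hr0 : 0 < r := by linarith
  have hβr : (r - 1) / r < β := by
    rw [lt_div_iff₀ (by linarith)] at hrβ
    rw [div_lt_iff₀ hr0]
    linarith
  obtain ⟨δ, hδr, hδβ⟩ := exists_between hβr
  have hδ0 : 0 < δ := (div_pos (by linarith) hr0).trans hδr
  have hrδ : r - 1 < r * δ := by rwa [div_lt_iff₀' hr0] at hδr
  have hδ1 : δ < 1 := by linarith
  obtain ⟨a, ha1, ha2⟩ : ∃ a, (r - 1) / δ < a ∧ a < 1 / (1 - δ) :=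
    exists_between (by rw [div_lt_div_iff₀ hδ0 (by linarith)]; nlinarith)
  have ha0 : 0 < a := (div_pos (by linarith) hδ0).trans ha1
  have hrγ : r < 1 + a * δ := by rw [div_lt_iff₀ hδ0] at ha1; linarith
  have haγ : a < 1 + a * δ := by rw [lt_div_iff₀ (by linarith)] at ha2; linarith
  have h1γ : 1 < 1 + a * δ := by nlinarith
  obtain ⟨C, hC, hpotter⟩ := exists_pos_eventually_mul_rpow_le_of_tendsto_div hψmono
    (hψ.eventually_gt_atTop 0) hψ2 hδ0.le hδβ
  have hC3 : 0 < C / 3 := by positivity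
  filter_upwards [(tendsto_rpow_atTop ha0).eventually hpotter,
    eventually_mul_rpow_le_mul_rpow hrγ K hC3, eventually_mul_rpow_le_mul_rpow h1γ 1 hC3,
    eventually_mul_rpow_le_mul_rpow haγ t hC3, eventually_gt_atTop 0] with u hψu hK hu ht hu0
  refine ⟨u ^ a, by positivity, ?_⟩
  have hgrowth : C * u ^ (1 + a * δ) ≤ u * ψ (u ^ a) :=
    calc C * u ^ (1 + a * δ) = u * (C * (u ^ a) ^ δ) := by
          rw [← Real.rpow_mul hu0.le, Real.rpow_add hu0, Real.rpow_one]
          ring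
      _ ≤ u * ψ (u ^ a) := by gcongr
  rw [Real.rpow_one, one_mul] at hu
  linarith

lemma eventually_exists_mul_rpow_add_le_mul_sub_mul {β : ℝ}
    (hψmono : MonotoneOn ψ (Ioi 0)) (hψ : Tendsto ψ atTop atTop)
    (hψ2 : Tendsto (fun s => ψ (2 * s) / ψ s) atTop (𝓝 (2 ^ β))) (hβ1 : β < 1)
    (hrβ : r < 1 / (1 - β)) (hK : 0 ≤ K) (t : ℝ) :
    ∀ᶠ u in atTop, ∃ s > 0, K * u ^ r + u ≤ u * ψ s - t * s := by
  rcases le_or_gt r 1 with hr1 | hr1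
  · exact eventually_exists_mul_rpow_add_le_mul_sub_mul_of_le_one hψ hr1 hK t
  · exact eventually_exists_mul_rpow_add_le_mul_sub_mul_of_one_lt hψmono hψ hψ2 hβ1 hr1 hrβ K t

end ChernoffExponent

lemma tsum_ne_top_of_eventually_le {f g : ℕ → ℝ≥0∞} (hf : ∀ n, f n ≠ ∞)
    (hfg : ∀ᶠ n in atTop, f n ≤ g n) (hg : ∑' n, g n ≠ ∞) : ∑' n, f n ≠ ∞ := by
  obtain ⟨N, hN⟩ := eventually_atTop.1 hfg
  rw [← ENNReal.summable.sum_add_tsum_nat_add' (k := N)]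
  refine ENNReal.add_ne_top.2 ⟨ENNReal.sum_ne_top.2 fun n _ => hf n, ne_top_of_le_ne_top hg ?_⟩
  calc ∑' n, f (n + N) ≤ ∑' n, g (n + N) := ENNReal.tsum_le_tsum fun n => hN _ (by omega)
    _ ≤ ∑' n, g n := ENNReal.tsum_comp_le_tsum_of_injective (add_left_injective N) g

lemma lintegral_le_add_tsum_mul_measure {Ω : Type*} [MeasurableSpace Ω] (μ : Measure Ω)
    {g : ℝ → ℝ≥0∞} (hg : MonotoneOn g (Ici 0)) {X : Ω → ℝ} (hX : ∀ ω, 0 ≤ X ω)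
    {A : ℕ → Set Ω} (hA : ∀ n, MeasurableSet (A n)) (hXA : ∀ (n : ℕ) ω, (n : ℝ) < X ω → ω ∈ A n) :
    ∫⁻ ω, g (X ω) ∂μ ≤ g 0 * μ univ + ∑' n : ℕ, g (n + 1) * μ (A n) := by
  have hpointwise : ∀ ω, g (X ω) ≤ g 0 + ∑' n : ℕ, (A n).indicator (fun _ => g (n + 1)) ω := by
    intro ω
    rcases (hX ω).eq_or_lt with hzero | hpos
    · rw [← hzero]
      exact le_self_add
    obtain ⟨n, hn⟩ := Nat.exists_eq_succ_of_ne_zero (Nat.ceil_pos.2 hpos).ne'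
    have hlt : (n : ℝ) < X ω := Nat.lt_ceil.1 (by omega)
    have hle : X ω ≤ n + 1 := by exact_mod_cast hn ▸ Nat.le_ceil (X ω)
    calc g (X ω) ≤ g (n + 1) := hg (hX ω) (mem_Ici.2 (by positivity)) hle
      _ = (A n).indicator (fun _ => g (n + 1)) ω :=
          (indicator_of_mem (hXA n ω hlt) (fun _ => g (n + 1))).symm
      _ ≤ ∑' n : ℕ, (A n).indicator (fun _ => g (n + 1)) ω := ENNReal.le_tsum n
      _ ≤ _ := le_add_self
  calc ∫⁻ ω, g (X ω) ∂μ ≤ ∫⁻ ω, g 0 + ∑' n : ℕ, (A n).indicator (fun _ => g (n + 1)) ω ∂μ :=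
        lintegral_mono hpointwise
    _ = g 0 * μ univ + ∑' n : ℕ, g (n + 1) * μ (A n) := by
      rw [lintegral_add_left measurable_const, lintegral_const,
        lintegral_tsum fun n => (measurable_const.indicator (hA n)).aemeasurable]
      simp only [lintegral_indicator_const (hA _)]

lemma measureReal_le_le_exp_mul_integral_exp_neg {Ω : Type*} [MeasurableSpace Ω] {μ : Measure Ω}
    [IsFiniteMeasure μ] {X : Ω → ℝ} (hX : Measurable X) (hXnn : ∀ ω, 0 ≤ X ω) {s : ℝ}
    (hs : 0 ≤ s) (t : ℝ) :
    μ.real {ω | X ω ≤ t} ≤ Real.exp (s * t) * ∫ ω, Real.exp (-(s * X ω)) ∂μ := by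
  have hint : Integrable (fun ω => Real.exp (-s * X ω)) μ := by
    refine .of_bound (by fun_prop) 1 (ae_of_all _ fun ω => ?_)
    rw [Real.norm_of_nonneg (Real.exp_nonneg _), Real.exp_le_one_iff, neg_mul, neg_nonpos]
    exact mul_nonneg hs (hXnn ω)
  simpa [ProbabilityTheory.mgf] using
    ProbabilityTheory.measure_le_le_exp_mul_mgf t (neg_nonpos.2 hs) hint

lemma eventually_ofReal_exp_mul_measure_le_le_exp_neg {Ω : Type*} [MeasurableSpace Ω]
    (P : Measure Ω) [IsFiniteMeasure P] {D : ℝ → Ω → ℝ} {ψ : ℝ → ℝ} {lam r t : ℝ}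
    (hDmeas : ∀ u, Measurable (D u)) (hDnn : ∀ u, 0 ≤ u → ∀ ω, 0 ≤ D u ω)
    (hlaplace : ∀ s, 0 < s → ∀ u, 0 ≤ u →
      ∫ ω, Real.exp (-(s * D u ω)) ∂P = Real.exp (-(u * ψ s)))
    (hlam : 0 ≤ lam) (hr : 0 ≤ r)
    (hrate : ∀ᶠ u in atTop, ∃ s > 0, lam * 2 ^ r * u ^ r + u ≤ u * ψ s - t * s) :
    ∀ᶠ n : ℕ in atTop, ENNReal.ofReal (Real.exp (lam * ((n : ℝ) + 1) ^ r)) * P {ω | D n ω ≤ t} ≤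
      ENNReal.ofReal (Real.exp (-n)) := by
  filter_upwards [tendsto_natCast_atTop_atTop.eventually (hrate.and (eventually_ge_atTop 1))]
    with n ⟨⟨s, hs, hsn⟩, hn⟩
  have hchernoff := measureReal_le_le_exp_mul_integral_exp_neg (μ := P) (hDmeas n)
    (hDnn n n.cast_nonneg) hs.le t
  rw [hlaplace s hs n n.cast_nonneg, ← Real.exp_add] at hchernoff
  have hpow : lam * ((n : ℝ) + 1) ^ r ≤ lam * 2 ^ r * n ^ r := by
    rw [mul_assoc, ← Real.mul_rpow zero_le_two n.cast_nonneg]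
    gcongr
    linarith
  rw [← ofReal_measureReal, ← ENNReal.ofReal_mul (Real.exp_nonneg _)]
  refine ENNReal.ofReal_le_ofReal
    ((mul_le_mul_of_nonneg_left hchernoff (Real.exp_nonneg _)).trans ?_)
  rw [← Real.exp_add, Real.exp_le_exp]
  linarith

noncomputable def firstPassageTime (f : ℝ → ℝ) (t : ℝ) : ℝ := sInf {u | 0 < u ∧ t < f u}

lemma firstPassageTime_nonneg (f : ℝ → ℝ) (t : ℝ) : 0 ≤ firstPassageTime f t :=
  Real.sInf_nonneg fun _ hu => hu.1.le

lemma le_of_lt_firstPassageTime {f : ℝ → ℝ} {t u : ℝ} (h0 : f 0 ≤ t) (hu : 0 ≤ u)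
    (h : u < firstPassageTime f t) : f u ≤ t := by
  rcases hu.eq_or_lt with rfl | hu
  · exact h0
  by_contra! hfu
  exact h.not_ge (csInf_le ⟨0, fun _ hv => hv.1.le⟩ ⟨hu, hfu⟩)

theorem exp_moment_inverse_subordinator_finite_general
    {Ω : Type*} [MeasurableSpace Ω] (P : Measure Ω) [IsProbabilityMeasure P]
    (D : ℝ → Ω → ℝ) (ν : Measure ℝ) (ψ : ℝ → ℝ) (β lam t r : ℝ)
    (hDmeas : ∀ u, Measurable (D u))
    (hD0 : ∀ ω, D 0 ω = 0)
    (hDmono : ∀ ω, MonotoneOn (fun u => D u ω) (Set.Ici 0))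
    (hν : ∫⁻ y in Set.Ioi (0 : ℝ), ENNReal.ofReal (min y 1) ∂ν < ⊤)
    (hνinf : ν (Set.Ioi (0 : ℝ)) = ⊤)
    (hψ : ∀ s, 0 < s → ψ s = ∫ y in Set.Ioi (0 : ℝ), (1 - Real.exp (-(s * y))) ∂ν)
    (hlaplace : ∀ s, 0 < s → ∀ u, 0 ≤ u →
      ∫ ω, Real.exp (-(s * D u ω)) ∂P = Real.exp (-(u * ψ s)))
    (hβ1 : β < 1)
    (hRV : ∀ c, 0 < c → Tendsto (fun s => ψ (c * s) / ψ s) atTop (𝓝 (c ^ β)))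
    (hlam : 0 < lam) (ht : 0 < t) (hr : 0 < r) (hrβ : r < 1 / (1 - β)) :
    ∫⁻ ω, ENNReal.ofReal (Real.exp (lam * (sInf {u : ℝ | 0 < u ∧ t < D u ω}) ^ r)) ∂P < ⊤ := by
  have hDnn : ∀ u, 0 ≤ u → ∀ ω, 0 ≤ D u ω := fun u hu ω => hD0 ω ▸ hDmono ω self_mem_Ici hu hu
  have hrate := eventually_exists_mul_rpow_add_le_mul_sub_mul
    (monotoneOn_of_eq_integral_one_sub_exp hν hψ)
    (tendsto_atTop_of_eq_integral_one_sub_exp hν hνinf hψ)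
    (hRV 2 two_pos) hβ1 hrβ (by positivity : 0 ≤ lam * 2 ^ r) t
  set g : ℝ → ℝ≥0∞ := fun x => ENNReal.ofReal (Real.exp (lam * x ^ r))
  have hg : MonotoneOn g (Ici 0) := fun x hx y _ hxy =>
    ENNReal.ofReal_le_ofReal (Real.exp_le_exp.2 (by gcongr))
  have htail : ∀ᶠ n : ℕ in atTop,
      g (n + 1) * P {ω | D n ω ≤ t} ≤ ENNReal.ofReal (Real.exp (-n)) :=
    eventually_ofReal_exp_mul_measure_le_le_exp_neg P hDmeas hDnn hlaplace hlam.le hr.le hrate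
  calc ∫⁻ ω, g (firstPassageTime (fun u => D u ω) t) ∂P
      ≤ g 0 * P univ + ∑' n : ℕ, g (n + 1) * P {ω | D n ω ≤ t} :=
        lintegral_le_add_tsum_mul_measure P hg (fun ω => firstPassageTime_nonneg _ t)
          (fun n => measurableSet_le (hDmeas n) measurable_const) fun n ω hn =>
            le_of_lt_firstPassageTime (by rw [hD0]; exact ht.le) n.cast_nonneg hn
    _ < ∞ := ENNReal.add_lt_top.2 ⟨ENNReal.mul_lt_top ENNReal.ofReal_lt_top (measure_lt_top P _),
        (tsum_ne_top_of_eventually_le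
          (fun n => ENNReal.mul_ne_top ENNReal.ofReal_ne_top (measure_ne_top P _)) htail
          Real.summable_exp_neg_nat.tsum_ofReal_ne_top).lt_top⟩

/-- Let `D` be a subordinator (a nondecreasing Lévy process started at `0`,
with càdlàg paths, stationary independent increments, and Laplace transform
`E[exp (-s D_u)] = exp (-u ψ s)`) whose Lévy measure `ν` is infinite, and whose Laplace
exponent `ψ` is regularly varying at `∞` with index `β ∈ [0,1)`.  Let `E` be the inverse
subordinator `E_t = inf {u > 0 : D_u > t}`.  Fix `λ > 0`, `t > 0`, `r > 0`.
If `r < 1/(1-β)`, then `E[exp (λ E_t ^ r)] < ∞`. -/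
theorem exp_moment_inverse_subordinator_finite
    {Ω : Type*} [MeasurableSpace Ω] (P : Measure Ω) [IsProbabilityMeasure P]
    (D : ℝ → Ω → ℝ) (ν : Measure ℝ) (ψ : ℝ → ℝ) (β lam t r : ℝ)
    (hDmeas : ∀ u, Measurable (D u))
    (hD0 : ∀ ω, D 0 ω = 0)
    (hDmono : ∀ ω, MonotoneOn (fun u => D u ω) (Set.Ici 0))
    (hDrc : ∀ ω, ∀ u, 0 ≤ u → ContinuousWithinAt (fun v => D v ω) (Set.Ici u) u)
    (hstat : ∀ s u : ℝ, 0 ≤ s → 0 ≤ u →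
      Measure.map (fun ω => D (s + u) ω - D s ω) P = Measure.map (D u) P)
    (hindep : ∀ (n : ℕ) (τ : Fin (n + 1) → ℝ), (∀ i, 0 ≤ τ i) → Monotone τ →
      ProbabilityTheory.iIndepFun
        (fun i : Fin n => fun ω => D (τ i.succ) ω - D (τ i.castSucc) ω) P)
    (hν : ∫⁻ y in Set.Ioi (0 : ℝ), ENNReal.ofReal (min y 1) ∂ν < ⊤)
    (hνinf : ν (Set.Ioi (0 : ℝ)) = ⊤)
    (hψ : ∀ s, 0 < s → ψ s = ∫ y in Set.Ioi (0 : ℝ), (1 - Real.exp (-(s * y))) ∂ν)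
    (hlaplace : ∀ s, 0 < s → ∀ u, 0 ≤ u →
      ∫ ω, Real.exp (-(s * D u ω)) ∂P = Real.exp (-(u * ψ s)))
    (hβ0 : 0 ≤ β) (hβ1 : β < 1)
    (hRV : ∀ c, 0 < c → Tendsto (fun s => ψ (c * s) / ψ s) atTop (𝓝 (c ^ β)))
    (hlam : 0 < lam) (ht : 0 < t) (hr : 0 < r) (hrβ : r < 1 / (1 - β)) :
    ∫⁻ ω, ENNReal.ofReal (Real.exp (lam * (sInf {u : ℝ | 0 < u ∧ t < D u ω}) ^ r)) ∂P < ⊤ :=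
  exp_moment_inverse_subordinator_finite_general P D ν ψ β lam t r hDmeas hD0 hDmono hν hνinf hψ
    hlaplace hβ1 hRV hlam ht hr hrβ
end

section
/- Let D be a subordinator with infinite Lévy measure whose Laplace exponent ψ is regularly varying at ∞ with index β ∈ [0,1), and let E be its inverse subordinator. Fix λ > 0, t > 0 and r > 0. If r > 1/(1−β), then E[exp(λ E_t^r)] = ∞. -/
/-!
Chernoff's bound applied to the Laplace transform at `s = u ^ r` gives
`P(D_u ≤ t) ≥ exp (-u ψ(u ^ r)) - exp (-t u ^ r)`, and on `{D_u ≤ t}` the inverse subordinator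
satisfies `E_t ≥ u`, so `E[exp (λ E_t ^ r)] ≥ exp (λ u ^ r) P(D_u ≤ t)`. Regular variation gives
`ψ(s) = O(s ^ α)` for every `α > β`, hence `u ψ(u ^ r) = O(u ^ (1 + r α)) = o(u ^ r)` once
`β < α < 1 - 1/r`, which is possible exactly when `r > 1/(1-β)`. The lower bound then behaves like
`exp ((λ - o(1)) u ^ r) → ∞`.
-/

open MeasureTheory Filter Topology Set Asymptotics ProbabilityTheory

lemma isLittleO_rpow_rpow_atTop {p q : ℝ} (hpq : p < q) :
    (fun x : ℝ => x ^ p) =o[atTop] fun x => x ^ q := by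
  refine (isLittleO_iff_tendsto' ?_).mpr ?_
  · filter_upwards [eventually_gt_atTop 0] with x hx hxq
    exact absurd hxq (Real.rpow_pos_of_pos hx q).ne'
  · refine (tendsto_rpow_neg_atTop (sub_pos.2 hpq)).congr' ?_
    filter_upwards [eventually_gt_atTop 0] with x hx
    rw [← Real.rpow_sub hx, neg_sub]

/-- Potter-type bound: the doubling ratio of `ψ` eventually stays below `2 ^ α`, and iterating
this along `s, s/2, s/4, …` down to a fixed window `[s₀, 2 s₀]` bounds `ψ s` by `C s ^ α`. -/
lemma isBigO_rpow_of_tendsto_div_two_mul {ψ : ℝ → ℝ} {α β : ℝ} (hψ : ∀ᶠ s in atTop, 0 < ψ s)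
    (hmono : MonotoneOn ψ (Ioi 0))
    (hdouble : Tendsto (fun s => ψ (2 * s) / ψ s) atTop (𝓝 (2 ^ β))) (hβα : β < α) (hα : 0 ≤ α) :
    ψ =O[atTop] fun s => s ^ α := by
  have hratio : ∀ᶠ s in atTop, ψ (2 * s) / ψ s < 2 ^ α :=
    hdouble.eventually_lt_const (Real.rpow_lt_rpow_of_exponent_lt one_lt_two hβα)
  obtain ⟨s₀, hs₀⟩ := (hψ.and (hratio.and (eventually_gt_atTop 0))).exists_forall_of_atTop
  have hs₀pos : 0 < s₀ := (hs₀ s₀ le_rfl).2.2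
  have hstep : ∀ s, s₀ ≤ s → ψ (2 * s) ≤ 2 ^ α * ψ s := fun s hs =>
    ((div_lt_iff₀ (hs₀ s hs).1).1 (hs₀ s hs).2.1).le
  set C := ψ (2 * s₀) / s₀ ^ α
  have hC : 0 ≤ C := div_nonneg (hs₀ _ (by linarith)).1.le (by positivity)
  have hwindow : ∀ s, s₀ ≤ s → s ≤ 2 * s₀ → ψ s ≤ C * s ^ α := fun s hs₀s hs =>
    calc ψ s ≤ ψ (2 * s₀) := hmono (hs₀pos.trans_le hs₀s) (by simp; linarith) hs
      _ = C * s₀ ^ α := (div_mul_cancel₀ _ (by positivity)).symm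
      _ ≤ C * s ^ α := by gcongr
  have hdyadic : ∀ n : ℕ, ∀ s, s₀ ≤ s → s ≤ 2 ^ n * s₀ → ψ s ≤ C * s ^ α := by
    intro n
    induction n with
    | zero => exact fun s hs₀s hs => hwindow s hs₀s (by linarith)
    | succ n ih =>
      intro s hs₀s hs
      by_cases hsmall : s ≤ 2 * s₀
      · exact hwindow s hs₀s hsmall
      have hhalf : s₀ ≤ s / 2 := by linarith
      calc ψ s = ψ (2 * (s / 2)) := by ring_nf
        _ ≤ 2 ^ α * ψ (s / 2) := hstep _ hhalf
        _ ≤ 2 ^ α * (C * (s / 2) ^ α) := by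
            gcongr; exact ih _ hhalf (by rw [pow_succ] at hs; linarith)
        _ = C * s ^ α := by
            rw [Real.div_rpow (by linarith) zero_le_two]; field_simp
  refine IsBigO.of_bound C ?_
  filter_upwards [eventually_ge_atTop s₀] with s hs
  obtain ⟨n, hn⟩ := pow_unbounded_of_one_lt (s / s₀) one_lt_two
  rw [Real.norm_of_nonneg (hs₀ s hs).1.le,
    Real.norm_of_nonneg (Real.rpow_nonneg (hs₀pos.trans_le hs).le α)]
  exact hdyadic n s hs ((div_lt_iff₀ hs₀pos).1 hn).le

lemma isLittleO_mul_comp_rpow {ψ : ℝ → ℝ} {α r : ℝ} (hψ : ψ =O[atTop] fun s => s ^ α)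
    (hr : 0 < r) (hαr : 1 + r * α < r) : (fun u => u * ψ (u ^ r)) =o[atTop] fun u => u ^ r := by
  refine (((isBigO_refl (fun u : ℝ => u) atTop).mul
    (hψ.comp_tendsto (tendsto_rpow_atTop hr))).trans_eventuallyEq ?_).trans_isLittleO
    (isLittleO_rpow_rpow_atTop hαr)
  filter_upwards [eventually_gt_atTop 0] with u hu
  simp only [Function.comp, ← Real.rpow_mul hu.le, Real.rpow_add hu, Real.rpow_one]

lemma exists_lt_and_one_add_mul_lt {β r : ℝ} (hβ1 : β < 1) (hrβ : 1 / (1 - β) < r) :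
    ∃ α, β < α ∧ 1 + r * α < r := by
  have hr : 0 < r := lt_trans (one_div_pos.2 (sub_pos.2 hβ1)) hrβ
  obtain ⟨α, hβα, hα⟩ := exists_between (lt_sub_comm.1 ((one_div_lt (sub_pos.2 hβ1) hr).1 hrβ))
  refine ⟨α, hβα, ?_⟩
  have := mul_lt_mul_of_pos_left hα hr
  rw [mul_sub, mul_one_div_cancel hr.ne', mul_one] at this
  linarith

lemma tendsto_const_mul_sub_atTop_of_isLittleO {α : Type*} {l : Filter α} {g h : α → ℝ} {a : ℝ}
    (hh : Tendsto h l atTop) (hg : g =o[l] h) (ha : 0 < a) :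
    Tendsto (fun x => a * h x - g x) l atTop := by
  refine tendsto_atTop_mono' l ?_ (hh.const_mul_atTop (half_pos ha))
  filter_upwards [hg.bound (half_pos ha), hh.eventually_ge_atTop 0] with x hgx hhx
  rw [Real.norm_of_nonneg hhx] at hgx
  linarith [le_abs_self (g x), Real.norm_eq_abs (g x)]

lemma tendsto_exp_mul_mul_sub_exp_atTop {α : Type*} {l : Filter α} {g h : α → ℝ} {lam t : ℝ}
    (hh : Tendsto h l atTop) (hg : g =o[l] h) (hlam : 0 < lam) (ht : 0 < t) :
    Tendsto (fun x => Real.exp (lam * h x) * (Real.exp (-g x) - Real.exp (-(h x * t)))) l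
      atTop := by
  have hmain : Tendsto (fun x => Real.exp (lam * h x - g x)) l atTop :=
    Real.tendsto_exp_atTop.comp (tendsto_const_mul_sub_atTop_of_isLittleO hh hg hlam)
  have hcorr : Tendsto (fun x => 1 - Real.exp (-(t * h x - g x))) l (𝓝 1) := by
    simpa using (Real.tendsto_exp_neg_atTop_nhds_zero.comp
      (tendsto_const_mul_sub_atTop_of_isLittleO hh hg ht)).const_sub 1
  refine (hmain.atTop_mul_pos one_pos hcorr).congr fun x => ?_
  rw [mul_sub, mul_sub, mul_one, ← Real.exp_add, ← Real.exp_add, ← Real.exp_add]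
  ring_nf

lemma eq_top_of_tendsto_ofReal_le {α : Type*} {l : Filter α} [l.NeBot] {F : α → ℝ}
    {I : ENNReal} (hF : Tendsto F l atTop) (hI : ∀ᶠ x in l, ENNReal.ofReal (F x) ≤ I) : I = ⊤ :=
  top_unique (le_of_tendsto (ENNReal.tendsto_ofReal_atTop.comp hF) hI)

lemma le_csInf_of_monotoneOn {f : ℝ → ℝ} {u t : ℝ} (hf : MonotoneOn f (Ici 0)) (hu : 0 ≤ u)
    (hfu : f u ≤ t) (hne : ∃ v, 0 < v ∧ t < f v) : u ≤ sInf {v | 0 < v ∧ t < f v} := by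
  refine le_csInf hne fun v ⟨hv, hvt⟩ => le_of_not_gt fun hvu => ?_
  exact (hvt.trans_le (hf (mem_Ici.2 hv.le) (mem_Ici.2 hu) hvu.le)).not_ge hfu

lemma ofReal_exp_mul_measure_le_lintegral_exp_sInf {Ω : Type*} [MeasurableSpace Ω]
    {P : Measure Ω} {D : ℝ → Ω → ℝ} (hDmono : ∀ ω, MonotoneOn (fun u => D u ω) (Ici 0))
    {lam r t u : ℝ} (hlam : 0 ≤ lam) (hr : 0 ≤ r) (hu : 0 ≤ u)
    (hmeas : MeasurableSet {ω | D u ω ≤ t})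
    (hae : ∀ᵐ ω ∂P, ∃ v, 0 < v ∧ t < D v ω) :
    ENNReal.ofReal (Real.exp (lam * u ^ r)) * P {ω | D u ω ≤ t} ≤
      ∫⁻ ω, ENNReal.ofReal (Real.exp (lam * (sInf {v : ℝ | 0 < v ∧ t < D v ω}) ^ r)) ∂P := by
  rw [← lintegral_indicator_const hmeas]
  refine lintegral_mono_ae ?_
  filter_upwards [hae] with ω hω
  by_cases hDu : D u ω ≤ t
  · rw [indicator_of_mem (show ω ∈ {ω | D u ω ≤ t} from hDu)]
    gcongr
    exact le_csInf_of_monotoneOn (hDmono ω) hu hDu hω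
  · rw [indicator_of_notMem (show ω ∉ {ω | D u ω ≤ t} from hDu)]
    exact zero_le

section Laplace

variable {Ω : Type*} [MeasurableSpace Ω] {P : Measure Ω} [IsProbabilityMeasure P]

lemma integrable_exp_neg_mul {X : Ω → ℝ} (hX : Measurable X) (hX0 : ∀ ω, 0 ≤ X ω) {s : ℝ}
    (hs : 0 ≤ s) : Integrable (fun ω => Real.exp (-(s * X ω))) P := by
  refine Integrable.of_bound (by fun_prop) 1 (ae_of_all _ fun ω => ?_)
  rw [Real.norm_of_nonneg (Real.exp_pos _).le, Real.exp_le_one_iff, neg_nonpos]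
  exact mul_nonneg hs (hX0 ω)

lemma integral_exp_neg_mul_le {X : Ω → ℝ} (hX : Measurable X) (hX0 : ∀ ω, 0 ≤ X ω) {s : ℝ}
    (hs : 0 ≤ s) (t : ℝ) :
    ∫ ω, Real.exp (-(s * X ω)) ∂P ≤ P.real {ω | X ω ≤ t} + Real.exp (-(s * t)) := by
  have hS : MeasurableSet {ω | X ω ≤ t} := hX measurableSet_Iic
  have hind : Integrable ({ω | X ω ≤ t}.indicator fun _ => (1 : ℝ)) P :=
    (integrable_const 1).indicator hS
  calc ∫ ω, Real.exp (-(s * X ω)) ∂P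
      ≤ ∫ ω, ({ω | X ω ≤ t}.indicator (fun _ => (1 : ℝ)) ω + Real.exp (-(s * t))) ∂P := by
        refine integral_mono (integrable_exp_neg_mul hX hX0 hs) (hind.add (integrable_const _))
          fun ω => ?_
        by_cases hω : X ω ≤ t
        · have : Real.exp (-(s * X ω)) ≤ 1 :=
            Real.exp_le_one_iff.2 (neg_nonpos.2 (mul_nonneg hs (hX0 ω)))
          rw [indicator_of_mem (show ω ∈ {ω | X ω ≤ t} from hω)]
          linarith [Real.exp_pos (-(s * t))]
        · simp only [indicator_of_notMem (show ω ∉ {ω | X ω ≤ t} from hω), zero_add]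
          exact Real.exp_le_exp.2 (neg_le_neg (mul_le_mul_of_nonneg_left (not_le.1 hω).le hs))
    _ = P.real {ω | X ω ≤ t} + Real.exp (-(s * t)) := by
        rw [integral_add hind (integrable_const _), integral_indicator_const 1 hS]
        simp

variable {D : ℝ → Ω → ℝ} {ψ : ℝ → ℝ}

lemma laplaceExponent_monotoneOn (hDmeas : ∀ u, Measurable (D u))
    (hDnn : ∀ u, 0 ≤ u → ∀ ω, 0 ≤ D u ω)
    (hlaplace : ∀ s, 0 < s → ∀ u, 0 ≤ u →
      ∫ ω, Real.exp (-(s * D u ω)) ∂P = Real.exp (-(u * ψ s))) :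
    MonotoneOn ψ (Ioi 0) := by
  intro s₁ hs₁ s₂ hs₂ hs
  have h := integral_mono (integrable_exp_neg_mul (P := P) (hDmeas 1) (hDnn 1 zero_le_one) hs₂.le)
    (integrable_exp_neg_mul (hDmeas 1) (hDnn 1 zero_le_one) hs₁.le) fun ω =>
      Real.exp_le_exp.2 (neg_le_neg (mul_le_mul_of_nonneg_right hs (hDnn 1 zero_le_one ω)))
  rw [hlaplace s₁ hs₁ 1 zero_le_one, hlaplace s₂ hs₂ 1 zero_le_one] at h
  simpa using h

lemma laplaceExponent_nonneg (hDmeas : ∀ u, Measurable (D u))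
    (hDnn : ∀ u, 0 ≤ u → ∀ ω, 0 ≤ D u ω)
    (hlaplace : ∀ s, 0 < s → ∀ u, 0 ≤ u →
      ∫ ω, Real.exp (-(s * D u ω)) ∂P = Real.exp (-(u * ψ s)))
    {s : ℝ} (hs : 0 < s) : 0 ≤ ψ s := by
  have h := integral_mono (integrable_exp_neg_mul (P := P) (hDmeas 1) (hDnn 1 zero_le_one) hs.le)
    (integrable_const 1) fun ω =>
      Real.exp_le_one_iff.2 (neg_nonpos.2 (mul_nonneg hs.le (hDnn 1 zero_le_one ω)))
  rw [hlaplace s hs 1 zero_le_one] at h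
  simpa using h

/-- `ψ ≥ 0`, and a zero of `ψ` would make the doubling ratio `ψ (2 s) / ψ s` vanish. -/
lemma eventually_laplaceExponent_pos (hDmeas : ∀ u, Measurable (D u))
    (hDnn : ∀ u, 0 ≤ u → ∀ ω, 0 ≤ D u ω)
    (hlaplace : ∀ s, 0 < s → ∀ u, 0 ≤ u →
      ∫ ω, Real.exp (-(s * D u ω)) ∂P = Real.exp (-(u * ψ s)))
    {β : ℝ} (hdouble : Tendsto (fun s => ψ (2 * s) / ψ s) atTop (𝓝 (2 ^ β))) :
    ∀ᶠ s in atTop, 0 < ψ s := by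
  filter_upwards [hdouble.eventually_const_lt (by positivity : (0 : ℝ) < 2 ^ β),
    eventually_gt_atTop 0] with s hratio hs
  exact lt_of_le_of_ne (laplaceExponent_nonneg hDmeas hDnn hlaplace hs)
    fun h => by simp [← h] at hratio

lemma measureReal_le_le_exp_sub (hDmeas : ∀ u, Measurable (D u))
    (hDnn : ∀ u, 0 ≤ u → ∀ ω, 0 ≤ D u ω)
    (hlaplace : ∀ s, 0 < s → ∀ u, 0 ≤ u →
      ∫ ω, Real.exp (-(s * D u ω)) ∂P = Real.exp (-(u * ψ s)))
    {s u : ℝ} (hs : 0 < s) (hu : 0 ≤ u) (t : ℝ) :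
    P.real {ω | D u ω ≤ t} ≤ Real.exp (s * t - u * ψ s) := by
  have h := measure_le_le_exp_mul_mgf (X := D u) (μ := P) t (neg_nonpos.2 hs.le)
    (by simpa only [neg_mul] using integrable_exp_neg_mul (P := P) (hDmeas u) (hDnn u hu) hs.le)
  simp only [mgf, neg_mul, neg_neg] at h
  rwa [hlaplace s hs u hu, ← Real.exp_add, ← sub_eq_add_neg] at h

lemma exp_neg_sub_exp_neg_le_measureReal (hDmeas : ∀ u, Measurable (D u))
    (hDnn : ∀ u, 0 ≤ u → ∀ ω, 0 ≤ D u ω)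
    (hlaplace : ∀ s, 0 < s → ∀ u, 0 ≤ u →
      ∫ ω, Real.exp (-(s * D u ω)) ∂P = Real.exp (-(u * ψ s)))
    {s u : ℝ} (hs : 0 < s) (hu : 0 ≤ u) (t : ℝ) :
    Real.exp (-(u * ψ s)) - Real.exp (-(s * t)) ≤ P.real {ω | D u ω ≤ t} := by
  have h := integral_exp_neg_mul_le (P := P) (hDmeas u) (hDnn u hu) hs.le t
  rw [hlaplace s hs u hu] at h
  linarith

/-- Once `ψ s > 0`, `P(D_v ≤ t) ≤ exp (s t - v ψ s) → 0`, so almost every path exceeds `t`;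
this keeps the infimum defining `E_t` away from the junk value `sInf ∅ = 0`. -/
lemma ae_exists_lt_of_laplaceExponent_pos (hDmeas : ∀ u, Measurable (D u))
    (hDnn : ∀ u, 0 ≤ u → ∀ ω, 0 ≤ D u ω)
    (hlaplace : ∀ s, 0 < s → ∀ u, 0 ≤ u →
      ∫ ω, Real.exp (-(s * D u ω)) ∂P = Real.exp (-(u * ψ s)))
    {s : ℝ} (hs : 0 < s) (hψs : 0 < ψ s) (t : ℝ) : ∀ᵐ ω ∂P, ∃ v, 0 < v ∧ t < D v ω := by
  have hbound : Tendsto (fun v => Real.exp (s * t - v * ψ s)) atTop (𝓝 0) := by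
    refine (Real.tendsto_exp_neg_atTop_nhds_zero.comp (tendsto_atTop_add_const_right _ (-(s * t))
      (tendsto_id.atTop_mul_const hψs))).congr fun v => ?_
    simp only [Function.comp_apply, id]
    ring_nf
  have hnull : P.real {ω | ∀ v, 0 < v → D v ω ≤ t} = 0 := by
    refine le_antisymm (ge_of_tendsto hbound ?_) measureReal_nonneg
    filter_upwards [eventually_gt_atTop 0] with v hv
    exact (measureReal_mono
      (show {ω | ∀ v, 0 < v → D v ω ≤ t} ⊆ {ω | D v ω ≤ t} from fun ω hω => hω v hv)).trans
      (measureReal_le_le_exp_sub hDmeas hDnn hlaplace hs hv.le t)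
  rw [measureReal_eq_zero_iff] at hnull
  exact measure_mono_null (fun ω hω v hv => not_lt.1 fun h => hω ⟨v, hv, h⟩) hnull

end Laplace

theorem exp_moment_inverse_subordinator_infinite_general
    {Ω : Type*} [MeasurableSpace Ω] (P : Measure Ω) [IsProbabilityMeasure P]
    (D : ℝ → Ω → ℝ) (ψ : ℝ → ℝ) (β lam t r : ℝ)
    (hDmeas : ∀ u, Measurable (D u))
    (hD0 : ∀ ω, D 0 ω = 0)
    (hDmono : ∀ ω, MonotoneOn (fun u => D u ω) (Set.Ici 0))
    (hlaplace : ∀ s, 0 < s → ∀ u, 0 ≤ u →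
      ∫ ω, Real.exp (-(s * D u ω)) ∂P = Real.exp (-(u * ψ s)))
    (hβ0 : 0 ≤ β) (hβ1 : β < 1)
    (hRV : ∀ c, 0 < c → Tendsto (fun s => ψ (c * s) / ψ s) atTop (𝓝 (c ^ β)))
    (hlam : 0 < lam) (ht : 0 < t) (hrβ : 1 / (1 - β) < r) :
    ∫⁻ ω, ENNReal.ofReal (Real.exp (lam * (sInf {u : ℝ | 0 < u ∧ t < D u ω}) ^ r)) ∂P = ⊤ := by
  have hr : 0 < r := lt_trans (one_div_pos.2 (sub_pos.2 hβ1)) hrβ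
  have hDnn : ∀ u, 0 ≤ u → ∀ ω, 0 ≤ D u ω := fun u hu ω => by
    simpa [hD0 ω] using hDmono ω (mem_Ici.2 le_rfl) (mem_Ici.2 hu) hu
  have hψpos := eventually_laplaceExponent_pos hDmeas hDnn hlaplace (hRV 2 two_pos)
  obtain ⟨s, hψs, hs⟩ := (hψpos.and (eventually_gt_atTop 0)).exists
  obtain ⟨α, hβα, hαr⟩ := exists_lt_and_one_add_mul_lt hβ1 hrβ
  have hψO := isBigO_rpow_of_tendsto_div_two_mul hψpos
    (laplaceExponent_monotoneOn hDmeas hDnn hlaplace) (hRV 2 two_pos) hβα (hβ0.trans hβα.le)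
  have hg := isLittleO_mul_comp_rpow hψO hr hαr
  refine eq_top_of_tendsto_ofReal_le
    (tendsto_exp_mul_mul_sub_exp_atTop (tendsto_rpow_atTop hr) hg hlam ht) ?_
  filter_upwards [eventually_gt_atTop 0] with u hu
  have hsu : 0 < u ^ r := Real.rpow_pos_of_pos hu r
  calc ENNReal.ofReal (Real.exp (lam * u ^ r) *
        (Real.exp (-(u * ψ (u ^ r))) - Real.exp (-(u ^ r * t))))
      ≤ ENNReal.ofReal (Real.exp (lam * u ^ r)) * P {ω | D u ω ≤ t} := by
        rw [ENNReal.ofReal_mul (Real.exp_pos _).le]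
        gcongr
        exact ENNReal.ofReal_le_of_le_toReal
          (exp_neg_sub_exp_neg_le_measureReal hDmeas hDnn hlaplace hsu hu.le t)
    _ ≤ _ := ofReal_exp_mul_measure_le_lintegral_exp_sInf hDmono hlam.le hr.le hu.le
        (hDmeas u measurableSet_Iic)
        (ae_exists_lt_of_laplaceExponent_pos hDmeas hDnn hlaplace hs hψs t)

/-- Let `D` be a subordinator (a nondecreasing Lévy process started at `0`,
with càdlàg paths, stationary independent increments, and Laplace transform
`E[exp (-s D_u)] = exp (-u ψ s)`) whose Lévy measure `ν` is infinite, and whose Laplace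
exponent `ψ` is regularly varying at `∞` with index `β ∈ [0,1)`.  Let `E` be the inverse
subordinator `E_t = inf {u > 0 : D_u > t}`.  Fix `λ > 0`, `t > 0`, `r > 0`.
If `r > 1/(1-β)`, then `E[exp (λ E_t ^ r)] = ∞`. -/
theorem exp_moment_inverse_subordinator_infinite
    {Ω : Type*} [MeasurableSpace Ω] (P : Measure Ω) [IsProbabilityMeasure P]
    (D : ℝ → Ω → ℝ) (ν : Measure ℝ) (ψ : ℝ → ℝ) (β lam t r : ℝ)
    (hDmeas : ∀ u, Measurable (D u))
    (hD0 : ∀ ω, D 0 ω = 0)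
    (hDmono : ∀ ω, MonotoneOn (fun u => D u ω) (Set.Ici 0))
    (hDrc : ∀ ω, ∀ u, 0 ≤ u → ContinuousWithinAt (fun v => D v ω) (Set.Ici u) u)
    (hstat : ∀ s u : ℝ, 0 ≤ s → 0 ≤ u →
      Measure.map (fun ω => D (s + u) ω - D s ω) P = Measure.map (D u) P)
    (hindep : ∀ (n : ℕ) (τ : Fin (n + 1) → ℝ), (∀ i, 0 ≤ τ i) → Monotone τ →
      ProbabilityTheory.iIndepFun
        (fun i : Fin n => fun ω => D (τ i.succ) ω - D (τ i.castSucc) ω) P)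
    (hν : ∫⁻ y in Set.Ioi (0 : ℝ), ENNReal.ofReal (min y 1) ∂ν < ⊤)
    (hνinf : ν (Set.Ioi (0 : ℝ)) = ⊤)
    (hψ : ∀ s, 0 < s → ψ s = ∫ y in Set.Ioi (0 : ℝ), (1 - Real.exp (-(s * y))) ∂ν)
    (hlaplace : ∀ s, 0 < s → ∀ u, 0 ≤ u →
      ∫ ω, Real.exp (-(s * D u ω)) ∂P = Real.exp (-(u * ψ s)))
    (hβ0 : 0 ≤ β) (hβ1 : β < 1)
    (hRV : ∀ c, 0 < c → Tendsto (fun s => ψ (c * s) / ψ s) atTop (𝓝 (c ^ β)))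
    (hlam : 0 < lam) (ht : 0 < t) (hr : 0 < r) (hrβ : 1 / (1 - β) < r) :
    ∫⁻ ω, ENNReal.ofReal (Real.exp (lam * (sInf {u : ℝ | 0 < u ∧ t < D u ω}) ^ r)) ∂P = ⊤ :=
  exp_moment_inverse_subordinator_infinite_general P D ψ β lam t r hDmeas hD0 hDmono hlaplace hβ0
    hβ1 hRV hlam ht hrβ
end

section
/- Let D be a subordinator with infinite Lévy measure ν and Laplace exponent ψ, let E be its inverse subordinator, and set g(s) = ψ'(s), R(s) = ψ(s) − sψ'(s). Fix λ > 0, t > 0 and r > 0. If there exist a constant ε > 0, a constant M > 0, and a function x : [M,∞) → (g(∞), g(0+)) such that s·x(s) > t and R(g^{−1}(x(s)))/s^{r−1} ≥ λ + ε for all s ≥ M, then E[exp(λ E_t^r)] < ∞. -/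
/-!
For `u ≥ M` take `s = xinv u`. Chernoff's bound with the Laplace transform gives
`P (D_u ≤ t) ≤ exp (s t - u ψ s)`, and since `t < u ψ'(s)` and `R s ≥ (λ + ε) u ^ (r - 1)` the
exponent is at most `-u R(s) ≤ -(λ + ε) u ^ r`. As `E_t > u` forces `D_u ≤ t`, cutting the range
of `E_t` into unit intervals bounds the moment by `∑ exp (λ (M + n + 1) ^ r - (λ + ε) (M + n) ^ r)`,
which converges because `(u + 1) ^ r / u ^ r → 1`.
-/

open MeasureTheory Filter Topology Set

open Real

lemma summable_exp_neg_mul_rpow {c r : ℝ} (hc : 0 < c) (hr : 0 < r) :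
    Summable fun n : ℕ => exp (-(c * (n : ℝ) ^ r)) := by
  have hlog : ∀ᶠ x : ℝ in atTop, 2 * log x ≤ c * x ^ r := by
    filter_upwards [(isLittleO_log_rpow_atTop hr).bound (half_pos hc), eventually_ge_atTop 1]
      with x hx hx1
    rw [norm_of_nonneg (log_nonneg hx1), norm_of_nonneg (by positivity)] at hx
    linarith
  refine .of_norm_bounded_eventually_nat (summable_nat_pow_inv.2 one_lt_two) ?_
  filter_upwards [tendsto_natCast_atTop_atTop.eventually hlog, eventually_ge_atTop 1] with n hn hn1
  have hpos : (0 : ℝ) < n := by exact_mod_cast hn1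
  calc ‖exp (-(c * (n : ℝ) ^ r))‖ ≤ exp (-(2 * log n)) := by
        rw [norm_of_nonneg (exp_pos _).le]; gcongr
    _ = ((n : ℝ) ^ 2)⁻¹ := by
        rw [exp_neg, show (2 : ℝ) * log n = log ((n : ℝ) ^ 2) by rw [log_pow]; push_cast; rfl,
          exp_log (by positivity)]

lemma eventually_rpow_add_one_le {r δ : ℝ} (hδ : 0 < δ) :
    ∀ᶠ x : ℝ in atTop, (x + 1) ^ r ≤ (1 + δ) * x ^ r := by
  have hlim : Tendsto (fun x : ℝ => (1 + x⁻¹) ^ r) atTop (𝓝 1) := by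
    have h := ((continuousAt_const.add continuousAt_id).rpow_const
      (Or.inl (by norm_num : (1 : ℝ) + 0 ≠ 0)) (x := (0:ℝ)) (p := r)).tendsto.comp
      tendsto_inv_atTop_zero
    simpa [Function.comp_def] using h
  filter_upwards [hlim.eventually_le_const (lt_add_of_pos_right 1 hδ), eventually_gt_atTop 0]
    with x hx hx0
  calc (x + 1) ^ r = x ^ r * (1 + x⁻¹) ^ r := by
        rw [← mul_rpow hx0.le (by positivity), mul_add, mul_inv_cancel₀ hx0.ne', mul_one]
    _ ≤ x ^ r * (1 + δ) := by gcongr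
    _ = (1 + δ) * x ^ r := mul_comm _ _

lemma summable_exp_rpow_add_one_sub {lam ε a r : ℝ} (hlam : 0 < lam) (hε : 0 < ε) (ha : 0 ≤ a)
    (hr : 0 < r) :
    Summable fun n : ℕ => exp (lam * (a + n + 1) ^ r - (lam + ε) * (a + n) ^ r) := by
  have hshift : Tendsto (fun n : ℕ => a + n) atTop atTop :=
    tendsto_atTop_add_const_left _ _ tendsto_natCast_atTop_atTop
  refine .of_norm_bounded_eventually_nat (summable_exp_neg_mul_rpow (half_pos hε) hr) ?_
  have hδ : 0 < ε / (2 * lam) := by positivity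
  filter_upwards [hshift.eventually (eventually_rpow_add_one_le hδ)] with n hn
  rw [norm_of_nonneg (exp_pos _).le, exp_le_exp]
  have hn_le : (n : ℝ) ^ r ≤ (a + n) ^ r := by gcongr; exact le_add_of_nonneg_left ha
  have : lam * (a + n + 1) ^ r ≤ (lam + ε / 2) * (a + n) ^ r := by
    calc lam * (a + n + 1) ^ r ≤ lam * ((1 + ε / (2 * lam)) * (a + n) ^ r) := by gcongr
      _ = (lam + ε / 2) * (a + n) ^ r := by field_simp
  linarith [mul_le_mul_of_nonneg_left hn_le (half_pos hε).le]

lemma measure_le_le_exp_of_integral_exp_neg {Ω : Type*} [MeasurableSpace Ω] {P : Measure Ω}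
    [IsFiniteMeasure P] {X : Ω → ℝ} {s t L : ℝ} (hs : 0 ≤ s)
    (hX : ∫ ω, exp (-(s * X ω)) ∂P = exp (-L)) :
    P {ω | X ω ≤ t} ≤ ENNReal.ofReal (exp (s * t - L)) := by
  have hint : Integrable (fun ω => exp (-s * X ω)) P :=
    .of_integral_ne_zero (by simp_rw [neg_mul, hX]; exact (exp_pos _).ne')
  rw [← ofReal_measureReal]
  refine ENNReal.ofReal_le_ofReal ((ProbabilityTheory.measure_le_le_exp_mul_mgf t
    (neg_nonpos.2 hs) hint).trans_eq ?_)
  rw [ProbabilityTheory.mgf]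
  simp_rw [neg_mul, hX, neg_neg, ← exp_add, sub_eq_add_neg]

lemma le_of_lt_sInf_setOf_lt {D : ℝ → ℝ} {t u : ℝ} (hu : 0 < u)
    (h : u < sInf {v | 0 < v ∧ t < D v}) : D u ≤ t :=
  not_lt.1 fun htu => h.not_ge (csInf_le ⟨0, fun _ hv => hv.1.le⟩ ⟨hu, htu⟩)

lemma le_add_tsum_indicator {Ω : Type*} {f : ℝ → ENNReal} (hf : MonotoneOn f (Ici 0))
    {a T : ℝ} (ha : 0 ≤ a) (hT : 0 ≤ T) {B : ℕ → Set Ω} {ω : Ω}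
    (hTB : ∀ n : ℕ, a + n < T → ω ∈ B n) :
    f T ≤ f a + ∑' n : ℕ, (B n).indicator (fun _ => f (a + n + 1)) ω := by
  rcases le_or_gt T a with hTa | haT
  · exact (hf hT ha hTa).trans le_self_add
  obtain ⟨n, hn⟩ : ∃ n : ℕ, (n : ℝ) + 1 = ⌈T - a⌉₊ :=
    ⟨⌈T - a⌉₊ - 1, by
      rw [Nat.cast_sub (Nat.one_le_ceil_iff.2 (sub_pos.2 haT))]; push_cast; ring⟩
  have hlt : a + n < T := by linarith [Nat.ceil_lt_add_one (sub_nonneg.2 haT.le)]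
  have hle : T ≤ a + n + 1 := by linarith [Nat.le_ceil (T - a)]
  calc f T ≤ f (a + n + 1) := hf hT (by simp only [mem_Ici]; positivity) hle
    _ = (B n).indicator (fun _ => f (a + n + 1)) ω :=
        (indicator_of_mem (hTB n hlt) (fun _ => f (a + n + 1))).symm
    _ ≤ ∑' n : ℕ, (B n).indicator (fun _ => f (a + n + 1)) ω := ENNReal.le_tsum n
    _ ≤ _ := le_add_self

lemma lintegral_le_add_tsum_of_lt_imp_mem {Ω : Type*} [MeasurableSpace Ω] (μ : Measure Ω)
    {f : ℝ → ENNReal} (hf : MonotoneOn f (Ici 0)) {a : ℝ} (ha : 0 ≤ a) {T : Ω → ℝ}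
    (hT : ∀ ω, 0 ≤ T ω) {B : ℕ → Set Ω} (hB : ∀ n, MeasurableSet (B n))
    (hTB : ∀ (n : ℕ) ω, a + n < T ω → ω ∈ B n) :
    ∫⁻ ω, f (T ω) ∂μ ≤ f a * μ univ + ∑' n : ℕ, f (a + n + 1) * μ (B n) := by
  calc ∫⁻ ω, f (T ω) ∂μ
      ≤ ∫⁻ ω, (f a + ∑' n : ℕ, (B n).indicator (fun _ => f (a + n + 1)) ω) ∂μ :=
        lintegral_mono fun ω => le_add_tsum_indicator hf ha (hT ω) (fun n => hTB n ω)
    _ = f a * μ univ + ∑' n : ℕ, f (a + n + 1) * μ (B n) := by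
        rw [lintegral_add_left measurable_const, lintegral_const,
          lintegral_tsum fun n => (measurable_const.indicator (hB n)).aemeasurable]
        simp_rw [lintegral_indicator_const (hB _)]

lemma chernoff_exponent_le_of_tail_criterion {ψ₀ ψ₁ s t u c r : ℝ} (hs : 0 < s) (hu : 0 < u)
    (ht : t < u * ψ₁) (hR : c ≤ (ψ₀ - s * ψ₁) / u ^ (r - 1)) :
    s * t - u * ψ₀ ≤ -(c * u ^ r) := by
  rw [le_div_iff₀ (rpow_pos_of_pos hu _)] at hR
  have hpow : u ^ r = u ^ (r - 1) * u := by rw [rpow_sub_one hu.ne']; field_simp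
  rw [hpow]
  linarith [mul_lt_mul_of_pos_left ht hs, mul_le_mul_of_nonneg_right hR hu.le]

theorem exp_moment_inverse_subordinator_finite_of_tail_criterion_general
    {Ω : Type*} [MeasurableSpace Ω] (P : Measure Ω) [IsProbabilityMeasure P]
    (D : ℝ → Ω → ℝ) (ψ : ℝ → ℝ) (lam t r : ℝ)
    (hDmeas : ∀ u, Measurable (D u))
    (hlaplace : ∀ s, 0 < s → ∀ u, 0 ≤ u →
      ∫ ω, Real.exp (-(s * D u ω)) ∂P = Real.exp (-(u * ψ s)))
    (hlam : 0 < lam) (hr : 0 < r)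
    (ε M : ℝ) (x xinv : ℝ → ℝ) (hε : 0 < ε) (hM : 0 < M)
    (hxrange : ∀ s, M ≤ s → 0 < xinv s ∧ deriv ψ (xinv s) = x s)
    (hxt : ∀ s, M ≤ s → t < s * x s)
    (hxR : ∀ s, M ≤ s →
      lam + ε ≤ (ψ (xinv s) - xinv s * deriv ψ (xinv s)) / s ^ (r - 1)) :
    ∫⁻ ω, ENNReal.ofReal (Real.exp (lam * (sInf {u : ℝ | 0 < u ∧ t < D u ω}) ^ r)) ∂P < ⊤ := by
  set f : ℝ → ENNReal := fun y => ENNReal.ofReal (exp (lam * y ^ r))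
  have hf : MonotoneOn f (Ici 0) := fun _ hy _ _ hyz =>
    ENNReal.ofReal_le_ofReal (exp_le_exp.2 (by gcongr))
  have htail (n : ℕ) :
      P {ω | D (M + n) ω ≤ t} ≤ ENNReal.ofReal (exp (-((lam + ε) * (M + n) ^ r))) := by
    have hMn : M ≤ M + n := le_add_of_nonneg_right n.cast_nonneg
    obtain ⟨hs, hψ'⟩ := hxrange _ hMn
    refine (measure_le_le_exp_of_integral_exp_neg hs.le (hlaplace _ hs _ (by positivity))).trans
      (ENNReal.ofReal_le_ofReal (exp_le_exp.2 ?_))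
    exact chernoff_exponent_le_of_tail_criterion hs (by positivity) (hψ' ▸ hxt _ hMn) (hxR _ hMn)
  calc ∫⁻ ω, f (sInf {u : ℝ | 0 < u ∧ t < D u ω}) ∂P
      ≤ f M * P univ + ∑' n : ℕ, f (M + n + 1) * P {ω | D (M + n) ω ≤ t} :=
        lintegral_le_add_tsum_of_lt_imp_mem P hf hM.le
          (fun ω => Real.sInf_nonneg fun _ hv => hv.1.le)
          (fun n => measurableSet_le (hDmeas _) measurable_const)
          (fun _ _ => le_of_lt_sInf_setOf_lt (by positivity))
    _ ≤ f M + ∑' n : ℕ,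
          ENNReal.ofReal (exp (lam * (M + n + 1) ^ r - (lam + ε) * (M + n) ^ r)) := by
        rw [measure_univ, mul_one]
        gcongr with n
        rw [sub_eq_add_neg, exp_add, ENNReal.ofReal_mul (exp_pos _).le]
        gcongr
        exact htail n
    _ < ⊤ := by
        rw [← ENNReal.ofReal_tsum_of_nonneg (fun n => (exp_pos _).le)
          (summable_exp_rpow_add_one_sub hlam hε hM.le hr)]
        exact ENNReal.add_lt_top.2 ⟨ENNReal.ofReal_lt_top, ENNReal.ofReal_lt_top⟩

/-- Let `D` be a subordinator with infinite Lévy measure `ν` and Laplace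
exponent `ψ`, let `E_t = inf {u > 0 : D_u > t}` be its inverse, and set `g = ψ'`,
`R s = ψ s - s ψ' s`.  Fix `λ > 0`, `t > 0`, `r > 0`.  If there exist `ε > 0`, `M > 0` and a
function `x : [M,∞) → (g(∞), g(0+))` (encoded by a positive preimage function `xinv` with
`g (xinv s) = x s`, i.e. `x s = g (g⁻¹ (x s))` lies in the range of `g` on `(0,∞)`) such that
`s * x s > t` and `R (g⁻¹ (x s)) / s ^ (r-1) ≥ λ + ε` for all `s ≥ M`, then
`E[exp (λ E_t ^ r)] < ∞`. -/
theorem exp_moment_inverse_subordinator_finite_of_tail_criterion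
    {Ω : Type*} [MeasurableSpace Ω] (P : Measure Ω) [IsProbabilityMeasure P]
    (D : ℝ → Ω → ℝ) (ν : Measure ℝ) (ψ : ℝ → ℝ) (lam t r : ℝ)
    (hDmeas : ∀ u, Measurable (D u))
    (hD0 : ∀ ω, D 0 ω = 0)
    (hDmono : ∀ ω, MonotoneOn (fun u => D u ω) (Set.Ici 0))
    (hDrc : ∀ ω, ∀ u, 0 ≤ u → ContinuousWithinAt (fun v => D v ω) (Set.Ici u) u)
    (hstat : ∀ s u : ℝ, 0 ≤ s → 0 ≤ u →
      Measure.map (fun ω => D (s + u) ω - D s ω) P = Measure.map (D u) P)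
    (hindep : ∀ (n : ℕ) (τ : Fin (n + 1) → ℝ), (∀ i, 0 ≤ τ i) → Monotone τ →
      ProbabilityTheory.iIndepFun
        (fun i : Fin n => fun ω => D (τ i.succ) ω - D (τ i.castSucc) ω) P)
    (hν : ∫⁻ y in Set.Ioi (0 : ℝ), ENNReal.ofReal (min y 1) ∂ν < ⊤)
    (hνinf : ν (Set.Ioi (0 : ℝ)) = ⊤)
    (hψ : ∀ s, 0 < s → ψ s = ∫ y in Set.Ioi (0 : ℝ), (1 - Real.exp (-(s * y))) ∂ν)
    (hlaplace : ∀ s, 0 < s → ∀ u, 0 ≤ u →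
      ∫ ω, Real.exp (-(s * D u ω)) ∂P = Real.exp (-(u * ψ s)))
    (hlam : 0 < lam) (ht : 0 < t) (hr : 0 < r)
    (ε M : ℝ) (x xinv : ℝ → ℝ) (hε : 0 < ε) (hM : 0 < M)
    (hxrange : ∀ s, M ≤ s → 0 < xinv s ∧ deriv ψ (xinv s) = x s)
    (hxt : ∀ s, M ≤ s → t < s * x s)
    (hxR : ∀ s, M ≤ s →
      lam + ε ≤ (ψ (xinv s) - xinv s * deriv ψ (xinv s)) / s ^ (r - 1)) :
    ∫⁻ ω, ENNReal.ofReal (Real.exp (lam * (sInf {u : ℝ | 0 < u ∧ t < D u ω}) ^ r)) ∂P < ⊤ :=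
  exp_moment_inverse_subordinator_finite_of_tail_criterion_general P D ψ lam t r hDmeas hlaplace
    hlam hr ε M x xinv hε hM hxrange hxt hxR
end

section
/- Let D be a subordinator with infinite Lévy measure ν and Laplace exponent ψ, let E be its inverse subordinator, and set g(s) = ψ'(s), R(s) = ψ(s) − sψ'(s). Fix λ > 0, t > 0 and r > 0. If there exist a constant ε ∈ (0, λ), a constant M > 0, and a decreasing function x : [M,∞) → (g(∞), g(0+)) such that s·x(s) < t and R(g^{−1}(x(s)))/s^{r−1} ≤ λ − ε for all s ≥ M, then E[exp(λ E_t^r)] = ∞. -/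
open MeasureTheory ProbabilityTheory Filter Topology Set Real

/-!
On `{D_s ≤ t}` the passage time `E_t` is at least `s`, so `E[exp (λ E_t^r)] ≥ e^{λ s^r} P(D_s ≤ t)`,
and it suffices to show `P(D_s ≤ t) ≥ e^{-κ s^r - C}` for some `κ < λ`. This only needs the Laplace
transform `E[e^{-z D_s}] = e^{-s ψ(z)}`: splitting `E[e^{-w D_s}]` over `{D_s < a}`,
`{a ≤ D_s ≤ t}` and `{D_s > t}`, and bounding the outer pieces by tilting to `w + θ` and to a
smaller `w'`, gives `P(D_s ≤ t) ≥ e^{w a - s ψ(w) - log 4}`. With `w' = g⁻¹(x((1 + δ) s))`,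
`w = (1 + δ) w'` and `a ≈ s g(w)`, the exponent is `-s R(w')` up to factors `1 + O(δ)`, by
concavity of `ψ` and the scaling `R(c w) ≤ c² R(w)` for `c ≥ 1`; the criterion bounds
`s R(w')` by `(λ - ε) (1 + δ)^{r-1} s^r`.
-/

-- The intercept at `0` of the tangent to `s ↦ 1 - e^{-s y}` at `s`, as a function of `u = s y`.
noncomputable def interceptKernel (u : ℝ) : ℝ := 1 - exp (-u) - u * exp (-u)

lemma hasDerivAt_exp_neg (u : ℝ) : HasDerivAt (fun u => exp (-u)) (-exp (-u)) u := by
  simpa using (hasDerivAt_neg u).exp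

lemma hasDerivAt_interceptKernel (u : ℝ) : HasDerivAt interceptKernel (u * exp (-u)) u :=
  (((hasDerivAt_const u 1).fun_sub (hasDerivAt_exp_neg u)).fun_sub
    ((hasDerivAt_id' u).fun_mul (hasDerivAt_exp_neg u))).congr_deriv (by ring)

lemma sq_mul_exp_neg_le_two_mul_interceptKernel {u : ℝ} (hu : 0 ≤ u) :
    u ^ 2 * exp (-u) ≤ 2 * interceptKernel u := by
  have hderiv (v : ℝ) : HasDerivAt (fun v => 2 * interceptKernel v - v ^ 2 * exp (-v))
      (v ^ 2 * exp (-v)) v :=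
    (((hasDerivAt_interceptKernel v).const_mul 2).fun_sub
      ((hasDerivAt_pow 2 v).fun_mul (hasDerivAt_exp_neg v))).congr_deriv (by push_cast; ring)
  have := monotone_of_hasDerivAt_nonneg hderiv (fun v => by positivity) hu
  simpa [interceptKernel] using this

lemma interceptKernel_nonneg {u : ℝ} (hu : 0 ≤ u) : 0 ≤ interceptKernel u := by
  nlinarith [sq_mul_exp_neg_le_two_mul_interceptKernel hu, sq_nonneg u, exp_pos (-u)]

lemma interceptKernel_mul_le {c u : ℝ} (hc : 1 ≤ c) (hu : 0 ≤ u) :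
    interceptKernel (c * u) ≤ c ^ 2 * interceptKernel u := by
  have hderiv (d : ℝ) : HasDerivAt (fun d => d ^ 2 * interceptKernel u - interceptKernel (d * u))
      (d * (2 * interceptKernel u - u ^ 2 * exp (-(d * u)))) d :=
    (((hasDerivAt_pow 2 d).mul_const _).fun_sub
      ((hasDerivAt_interceptKernel (d * u)).comp d ((hasDerivAt_id' d).mul_const u))).congr_deriv
      (by push_cast; ring)
  have hmono : MonotoneOn (fun d => d ^ 2 * interceptKernel u - interceptKernel (d * u)) (Ici 1) :=
    monotoneOn_of_hasDerivWithinAt_nonneg (convex_Ici 1)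
      (fun d _ => (hderiv d).continuousAt.continuousWithinAt)
      (fun d _ => (hderiv d).hasDerivWithinAt) fun d hd => by
        rw [interior_Ici] at hd
        have hd : 1 < d := hd
        have : u ^ 2 * exp (-(d * u)) ≤ u ^ 2 * exp (-u) := by gcongr; nlinarith
        nlinarith [sq_mul_exp_neg_le_two_mul_interceptKernel hu]
  simpa using hmono self_mem_Ici hc hc

def IsLevyMeasure (ν : Measure ℝ) : Prop :=
  ∫⁻ y in Ioi (0 : ℝ), ENNReal.ofReal (min y 1) ∂ν < ⊤

noncomputable def laplaceExponent (ν : Measure ℝ) (s : ℝ) : ℝ :=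
  ∫ y in Ioi 0, (1 - exp (-(s * y))) ∂ν

noncomputable def laplaceExponentDeriv (ν : Measure ℝ) (s : ℝ) : ℝ :=
  ∫ y in Ioi 0, y * exp (-(s * y)) ∂ν

noncomputable def tangentIntercept (ν : Measure ℝ) (s : ℝ) : ℝ :=
  ∫ y in Ioi 0, interceptKernel (s * y) ∂ν

lemma tangentIntercept_nonneg {ν : Measure ℝ} {s : ℝ} (hs : 0 ≤ s) :
    0 ≤ tangentIntercept ν s :=
  setIntegral_nonneg measurableSet_Ioi fun y (hy : 0 < y) =>
    interceptKernel_nonneg (by positivity)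

namespace IsLevyMeasure

variable {ν : Measure ℝ} (hν : IsLevyMeasure ν)
include hν

lemma integrableOn_of_le_mul_of_le {f : ℝ → ℝ} (hf : Continuous f) {a b : ℝ}
    (ha : ∀ y, 0 < y → ‖f y‖ ≤ a * y) (hb : ∀ y, 0 < y → ‖f y‖ ≤ b) :
    IntegrableOn f (Ioi 0) ν := by
  have hmin : IntegrableOn (fun y => min y 1) (Ioi 0) ν := by
    have hnonneg : 0 ≤ᵐ[ν.restrict (Ioi 0)] fun y => min y 1 := by
      filter_upwards [ae_restrict_mem measurableSet_Ioi] with y hy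
      exact le_min (le_of_lt hy) zero_le_one
    exact ⟨by fun_prop, (hasFiniteIntegral_iff_ofReal hnonneg).2 hν⟩
  refine Integrable.mono' (hmin.const_mul (max a b)) hf.aestronglyMeasurable ?_
  filter_upwards [ae_restrict_mem measurableSet_Ioi] with y hy
  rcases le_total y 1 with h | h
  · rw [min_eq_left h]
    exact (ha y hy).trans (mul_le_mul_of_nonneg_right (le_max_left _ _) (le_of_lt hy))
  · rw [min_eq_right h, mul_one]
    exact (hb y hy).trans (le_max_right _ _)

lemma integrableOn_one_sub_exp {s : ℝ} (hs : 0 ≤ s) :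
    IntegrableOn (fun y => 1 - exp (-(s * y))) (Ioi 0) ν := by
  refine hν.integrableOn_of_le_mul_of_le (a := s) (b := 1) (by fun_prop) (fun y hy => ?_)
    (fun y hy => ?_) <;>
  rw [Real.norm_of_nonneg (by simp; positivity)]
  · linarith [one_sub_le_exp_neg (s * y)]
  · linarith [exp_pos (-(s * y))]

lemma integrableOn_mul_exp_neg {s : ℝ} (hs : 0 < s) :
    IntegrableOn (fun y => y * exp (-(s * y))) (Ioi 0) ν := by
  refine hν.integrableOn_of_le_mul_of_le (a := 1) (b := exp (-1) / s) (by fun_prop)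
    (fun y hy => ?_) (fun y hy => ?_) <;>
  rw [Real.norm_of_nonneg (by positivity)]
  · rw [one_mul]
    exact mul_le_of_le_one_right hy.le (exp_le_one_iff.2 (by nlinarith))
  · rw [le_div_iff₀ hs, mul_comm, ← mul_assoc]
    exact mul_exp_neg_le_exp_neg_one (s * y)

lemma integrableOn_interceptKernel {s : ℝ} (hs : 0 < s) :
    IntegrableOn (fun y => interceptKernel (s * y)) (Ioi 0) ν :=
  ((hν.integrableOn_one_sub_exp hs.le).sub
    ((hν.integrableOn_mul_exp_neg hs).const_mul s)).congr_fun
      (fun y _ => by simp only [Pi.sub_apply, interceptKernel]; ring) measurableSet_Ioi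

lemma tangentIntercept_eq {s : ℝ} (hs : 0 < s) :
    tangentIntercept ν s = laplaceExponent ν s - s * laplaceExponentDeriv ν s := by
  rw [laplaceExponent, laplaceExponentDeriv, ← integral_const_mul,
    ← integral_sub (hν.integrableOn_one_sub_exp hs.le)
      ((hν.integrableOn_mul_exp_neg hs).const_mul s)]
  exact setIntegral_congr_fun measurableSet_Ioi fun y _ => by simp only [interceptKernel]; ring

lemma antitoneOn_laplaceExponentDeriv : AntitoneOn (laplaceExponentDeriv ν) (Ioi 0) :=
  fun a (ha : 0 < a) b (hb : 0 < b) hab =>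
    setIntegral_mono_on (hν.integrableOn_mul_exp_neg hb) (hν.integrableOn_mul_exp_neg ha)
      measurableSet_Ioi fun y (hy : 0 < y) => by gcongr

lemma laplaceExponentDeriv_pos (hν0 : ν (Ioi 0) ≠ 0) {s : ℝ} (hs : 0 < s) :
    0 < laplaceExponentDeriv ν s := by
  rw [laplaceExponentDeriv, setIntegral_pos_iff_support_of_nonneg_ae
    (ae_restrict_of_forall_mem measurableSet_Ioi fun y (hy : 0 < y) => by positivity)
    (hν.integrableOn_mul_exp_neg hs)]
  have : Function.support (fun y => y * exp (-(s * y))) ∩ Ioi 0 = Ioi 0 :=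
    inter_eq_right.2 fun y (hy : 0 < y) => by simp [hy.ne']
  rw [this]
  exact pos_iff_ne_zero.2 hν0

lemma laplaceExponent_pos (hν0 : ν (Ioi 0) ≠ 0) {s : ℝ} (hs : 0 < s) :
    0 < laplaceExponent ν s := by
  have := hν.tangentIntercept_eq hs
  nlinarith [tangentIntercept_nonneg (ν := ν) hs.le, hν.laplaceExponentDeriv_pos hν0 hs]

lemma hasDerivAt_laplaceExponent {s : ℝ} (hs : 0 < s) :
    HasDerivAt (laplaceExponent ν) (laplaceExponentDeriv ν s) s := by
  have hbound : ∀ᵐ y ∂ν.restrict (Ioi 0), ∀ c ∈ Metric.ball s (s / 2),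
      ‖y * exp (-(c * y))‖ ≤ y * exp (-(s / 2 * y)) := by
    filter_upwards [ae_restrict_mem measurableSet_Ioi] with y (hy : 0 < y) c hc
    have hc : s / 2 ≤ c := by linarith [(abs_lt.1 (mem_ball_iff_norm.1 hc)).1]
    rw [Real.norm_of_nonneg (by positivity)]
    gcongr
  have hderiv : ∀ᵐ y ∂ν.restrict (Ioi 0), ∀ c ∈ Metric.ball s (s / 2),
      HasDerivAt (fun c => 1 - exp (-(c * y))) (y * exp (-(c * y))) c :=
    ae_of_all _ fun y c _ =>
      ((((hasDerivAt_id' c).mul_const y).fun_neg.exp).const_sub 1).congr_deriv (by ring)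
  exact (hasDerivAt_integral_of_dominated_loc_of_deriv_le (F := fun c y => 1 - exp (-(c * y)))
    (Metric.ball_mem_nhds s (by positivity))
    (Eventually.of_forall fun c => by fun_prop) (hν.integrableOn_one_sub_exp hs.le)
    (by fun_prop) hbound (hν.integrableOn_mul_exp_neg (by positivity)) hderiv).2

lemma exists_laplaceExponent_sub_eq {a b : ℝ} (ha : 0 < a) (hab : a < b) :
    ∃ c ∈ Ioo a b,
      laplaceExponent ν b - laplaceExponent ν a = (b - a) * laplaceExponentDeriv ν c := by
  have hderiv : ∀ c ∈ Icc a b, HasDerivAt (laplaceExponent ν) (laplaceExponentDeriv ν c) c :=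
    fun c hc => hν.hasDerivAt_laplaceExponent (ha.trans_le hc.1)
  obtain ⟨c, hc, hslope⟩ := exists_hasDerivAt_eq_slope (laplaceExponent ν)
    (laplaceExponentDeriv ν) hab (fun c hc => (hderiv c hc).continuousAt.continuousWithinAt)
    fun c hc => hderiv c (Ioo_subset_Icc_self hc)
  refine ⟨c, hc, ?_⟩
  rw [hslope, mul_div_cancel₀ _ (sub_ne_zero.2 hab.ne')]

lemma laplaceExponent_sub_le {a b : ℝ} (ha : 0 < a) (hab : a ≤ b) :
    laplaceExponent ν b - laplaceExponent ν a ≤ (b - a) * laplaceExponentDeriv ν a := by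
  rcases hab.eq_or_lt with rfl | hab
  · simp
  obtain ⟨c, hc, heq⟩ := hν.exists_laplaceExponent_sub_eq ha hab
  rw [heq]
  exact mul_le_mul_of_nonneg_left
    (hν.antitoneOn_laplaceExponentDeriv ha (ha.trans hc.1) hc.1.le) (by linarith)

lemma le_laplaceExponent_sub {a b : ℝ} (ha : 0 < a) (hab : a ≤ b) :
    (b - a) * laplaceExponentDeriv ν b ≤ laplaceExponent ν b - laplaceExponent ν a := by
  rcases hab.eq_or_lt with rfl | hab
  · simp
  obtain ⟨c, hc, heq⟩ := hν.exists_laplaceExponent_sub_eq ha hab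
  rw [heq]
  exact mul_le_mul_of_nonneg_left (hν.antitoneOn_laplaceExponentDeriv (ha.trans hc.1)
    (ha.trans hab) hc.2.le)
    (by linarith)

lemma laplaceExponentDeriv_sub_le {s θ : ℝ} (hs : 0 < s) (hθ : 0 ≤ θ) :
    laplaceExponentDeriv ν s - laplaceExponentDeriv ν (s + θ) ≤
      2 * θ / s ^ 2 * tangentIntercept ν s := by
  rw [laplaceExponentDeriv, laplaceExponentDeriv, tangentIntercept, ← integral_const_mul,
    ← integral_sub (hν.integrableOn_mul_exp_neg hs)
      (hν.integrableOn_mul_exp_neg (by positivity))]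
  refine setIntegral_mono_on ((hν.integrableOn_mul_exp_neg hs).sub
    (hν.integrableOn_mul_exp_neg (by positivity)))
    ((hν.integrableOn_interceptKernel hs).const_mul _) measurableSet_Ioi fun y (hy : 0 < y) => ?_
  have hexp : exp (-(s * y)) - exp (-((s + θ) * y)) ≤ θ * y * exp (-(s * y)) := by
    have := one_sub_le_exp_neg (θ * y)
    have hsplit : exp (-((s + θ) * y)) = exp (-(θ * y)) * exp (-(s * y)) := by
      rw [← exp_add]; ring_nf
    rw [hsplit]
    nlinarith [exp_pos (-(s * y))]
  have hker := sq_mul_exp_neg_le_two_mul_interceptKernel (mul_pos hs hy).le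
  rw [div_mul_eq_mul_div, le_div_iff₀ (by positivity)]
  nlinarith [mul_le_mul_of_nonneg_left hexp hy.le]

lemma tangentIntercept_mul_le {c s : ℝ} (hc : 1 ≤ c) (hs : 0 < s) :
    tangentIntercept ν (c * s) ≤ c ^ 2 * tangentIntercept ν s := by
  rw [tangentIntercept, tangentIntercept, ← integral_const_mul]
  refine setIntegral_mono_on (hν.integrableOn_interceptKernel (by positivity))
    ((hν.integrableOn_interceptKernel hs).const_mul _) measurableSet_Ioi fun y (hy : 0 < y) => ?_
  rw [mul_assoc]
  exact interceptKernel_mul_le hc (by positivity)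

end IsLevyMeasure

section Laplace

variable {Ω : Type*} [MeasurableSpace Ω] {μ : Measure Ω}

lemma exp_neg_mul_le_add_add_indicator {w' w θ a t x : ℝ} (hw' : 0 ≤ w') (hww' : w' ≤ w)
    (hθ : 0 ≤ θ) :
    exp (-(w * x)) ≤ exp (θ * a) * exp (-((w + θ) * x)) +
      exp (-((w - w') * t)) * exp (-(w' * x)) + exp (-(w * a)) * (Iic t).indicator 1 x := by
  rw [← exp_add, ← exp_add]
  have h1 := exp_pos (θ * a + -((w + θ) * x))
  have h2 := exp_pos (-((w - w') * t) + -(w' * x))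
  have h3 : 0 ≤ exp (-(w * a)) * (Iic t).indicator 1 x :=
    mul_nonneg (exp_pos _).le (indicator_nonneg (fun _ _ => zero_le_one) _)
  rcases lt_or_ge x a with hxa | hax
  · have : exp (-(w * x)) ≤ exp (θ * a + -((w + θ) * x)) := exp_le_exp.2 (by nlinarith)
    linarith
  rcases lt_or_ge t x with htx | hxt
  · have : exp (-(w * x)) ≤ exp (-((w - w') * t) + -(w' * x)) := exp_le_exp.2 (by nlinarith)
    linarith
  · have : exp (-(w * x)) ≤ exp (-(w * a)) := exp_le_exp.2 (by nlinarith)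
    rw [indicator_of_mem (show x ∈ Iic t from hxt), Pi.one_apply, mul_one]
    linarith

lemma exp_sub_log_four_le_measureReal_le [IsFiniteMeasure μ] {X : Ω → ℝ} (hX : Measurable X)
    {L : ℝ → ℝ}
    (hL : ∀ z, 0 < z → ∫ ω, exp (-(z * X ω)) ∂μ = exp (-L z))
    {w' w θ a t : ℝ} (hw' : 0 < w') (hww' : w' ≤ w) (hθ : 0 ≤ θ)
    (hlow : θ * a ≤ L (w + θ) - L w - log 4) (hhigh : L w - L w' ≤ (w - w') * t - log 2) :
    exp (w * a - L w - log 4) ≤ μ.real {ω | X ω ≤ t} := by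
  have hint (z : ℝ) (hz : 0 < z) : Integrable (fun ω => exp (-(z * X ω))) μ :=
    Integrable.of_integral_ne_zero (by rw [hL z hz]; exact (exp_pos _).ne')
  have hw : 0 < w := hw'.trans_le hww'
  have hsplit : exp (-L w) ≤ exp (θ * a) * exp (-L (w + θ)) +
      exp (-((w - w') * t)) * exp (-L w') + exp (-(w * a)) * μ.real {ω | X ω ≤ t} := by
    have hind : Integrable ((X ⁻¹' Iic t).indicator (1 : Ω → ℝ)) μ :=
      (integrable_const 1).indicator (hX measurableSet_Iic)
    have h1 := (hint _ (by positivity : 0 < w + θ)).const_mul (exp (θ * a))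
    have h2 := (hint w' hw').const_mul (exp (-((w - w') * t)))
    have h3 := hind.const_mul (exp (-(w * a)))
    have := integral_mono (hint w hw) ((h1.add h2).add h3)
      fun ω => exp_neg_mul_le_add_add_indicator (x := X ω) hw'.le hww' hθ
    rwa [integral_add' (h1.add h2) h3, integral_add' h1 h2, integral_const_mul,
      integral_const_mul, integral_const_mul, integral_indicator_one (hX measurableSet_Iic),
      hL w hw, hL _ (by positivity), hL w' hw'] at this
  have hlow' : exp (θ * a) * exp (-L (w + θ)) ≤ exp (-L w) / 4 := by
    rw [← exp_add, ← exp_log (show (0 : ℝ) < 4 by norm_num), ← exp_sub]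
    exact exp_le_exp.2 (by linarith)
  have hhigh' : exp (-((w - w') * t)) * exp (-L w') ≤ exp (-L w) / 2 := by
    rw [← exp_add, ← exp_log (show (0 : ℝ) < 2 by norm_num), ← exp_sub]
    exact exp_le_exp.2 (by linarith)
  have hmid : exp (-L w) / 4 ≤ exp (-(w * a)) * μ.real {ω | X ω ≤ t} := by linarith
  calc exp (w * a - L w - log 4) = exp (w * a) * (exp (-L w) / 4) := by
        rw [exp_sub, exp_log (by norm_num), sub_eq_add_neg, exp_add, mul_div_assoc]
    _ ≤ exp (w * a) * (exp (-(w * a)) * μ.real {ω | X ω ≤ t}) := by gcongr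
    _ = μ.real {ω | X ω ≤ t} := by
        rw [← mul_assoc, ← exp_add, add_neg_cancel, exp_zero, one_mul]

lemma measureReal_le_le_exp_mul_integral [IsFiniteMeasure μ] {X : Ω → ℝ} {z : ℝ}
    (hz : 0 ≤ z) (hint : Integrable (fun ω => exp (-(z * X ω))) μ) (t : ℝ) :
    μ.real {ω | X ω ≤ t} ≤ exp (z * t) * ∫ ω, exp (-(z * X ω)) ∂μ := by
  simpa [mgf, neg_mul] using
    measure_le_le_exp_mul_mgf (X := X) (μ := μ) t (neg_nonpos.2 hz)
      (by simpa [neg_mul] using hint)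

lemma ae_exists_lt_of_laplace [IsFiniteMeasure μ] {D : ℝ → Ω → ℝ} {z L : ℝ} (hz : 0 < z)
    (hL : 0 < L)
    (hlap : ∀ u, 0 < u → ∫ ω, exp (-(z * D u ω)) ∂μ = exp (-(u * L))) (t : ℝ) :
    ∀ᵐ ω ∂μ, ∃ u, 0 < u ∧ t < D u ω := by
  have hbound (u : ℝ) (hu : 0 < u) : μ {ω | ¬∃ u, 0 < u ∧ t < D u ω} ≤
      ENNReal.ofReal (exp (z * t) * exp (-(u * L))) := by
    calc μ {ω | ¬∃ u, 0 < u ∧ t < D u ω} ≤ μ {ω | D u ω ≤ t} :=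
          measure_mono fun ω hω => not_lt.1 fun h => hω ⟨u, hu, h⟩
      _ = ENNReal.ofReal (μ.real {ω | D u ω ≤ t}) := (ofReal_measureReal).symm
      _ ≤ _ := by
        rw [← hlap u hu]
        exact ENNReal.ofReal_le_ofReal (measureReal_le_le_exp_mul_integral hz.le
          (Integrable.of_integral_ne_zero (by rw [hlap u hu]; exact (exp_pos _).ne')) t)
  have hlim : Tendsto (fun u => ENNReal.ofReal (exp (z * t) * exp (-(u * L)))) atTop (𝓝 0) := by
    rw [← ENNReal.ofReal_zero, ← mul_zero (exp (z * t))]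
    exact ENNReal.tendsto_ofReal (tendsto_const_nhds.mul (tendsto_exp_atBot.comp
      (tendsto_neg_atTop_atBot.comp (tendsto_id.atTop_mul_const hL))))
  exact ae_iff.2 (le_antisymm (ge_of_tendsto hlim (eventually_gt_atTop 0 |>.mono hbound)) bot_le)

-- Since `sInf ∅ = 0`, this is the first passage time only when `f` exceeds `t` somewhere.
noncomputable def passageTime (f : ℝ → ℝ) (t : ℝ) : ℝ := sInf {u | 0 < u ∧ t < f u}

lemma le_passageTime {f : ℝ → ℝ} (hf : MonotoneOn f (Ici 0)) {s t : ℝ} (hs : 0 ≤ s)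
    (hfs : f s ≤ t) (hpass : ∃ u, 0 < u ∧ t < f u) : s ≤ passageTime f t :=
  le_csInf hpass fun _ ⟨hu, hfu⟩ => le_of_not_gt fun hus =>
    (hfu.trans_le ((hf hu.le hs hus.le).trans hfs)).false

variable {D : ℝ → Ω → ℝ} {t lam r : ℝ}

lemma ofReal_exp_mul_measure_le_lintegral_passageTime (hD : ∀ u, Measurable (D u))
    (hmono : ∀ ω, MonotoneOn (fun u => D u ω) (Ici 0))
    (hpass : ∀ᵐ ω ∂μ, ∃ u, 0 < u ∧ t < D u ω) (hlam : 0 ≤ lam) (hr : 0 ≤ r) {s : ℝ}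
    (hs : 0 ≤ s) :
    ENNReal.ofReal (exp (lam * s ^ r)) * μ {ω | D s ω ≤ t} ≤
      ∫⁻ ω, ENNReal.ofReal (exp (lam * passageTime (fun u => D u ω) t ^ r)) ∂μ := by
  rw [← lintegral_indicator_const (measurableSet_le (hD s) measurable_const)]
  refine lintegral_mono_ae (hpass.mono fun ω hω => ?_)
  by_cases hωs : ω ∈ {ω | D s ω ≤ t}
  · rw [indicator_of_mem hωs]
    gcongr
    exact le_passageTime (hmono ω) hs hωs hω
  · rw [indicator_of_notMem hωs]
    exact zero_le

lemma lintegral_exp_passageTime_eq_top [IsFiniteMeasure μ] (hD : ∀ u, Measurable (D u))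
    (hmono : ∀ ω, MonotoneOn (fun u => D u ω) (Ici 0))
    (hpass : ∀ᵐ ω ∂μ, ∃ u, 0 < u ∧ t < D u ω) (hlam : 0 ≤ lam) (hr : 0 < r) {κ C : ℝ}
    (hκ : κ < lam) (hbound : ∀ᶠ s in atTop, exp (-(κ * s ^ r) - C) ≤ μ.real {ω | D s ω ≤ t}) :
    ∫⁻ ω, ENNReal.ofReal (exp (lam * passageTime (fun u => D u ω) t ^ r)) ∂μ = ⊤ := by
  refine ENNReal.eq_top_of_forall_nnreal_le fun n => ?_
  have htend : Tendsto (fun s => exp ((lam - κ) * s ^ r - C)) atTop atTop :=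
    tendsto_exp_atTop.comp (tendsto_atTop_add_const_right _ _
      ((tendsto_rpow_atTop hr).const_mul_atTop (sub_pos.2 hκ)))
  obtain ⟨s, hsn, hs, hs0⟩ :=
    ((htend.eventually_ge_atTop n).and (hbound.and (eventually_ge_atTop 0))).exists
  calc (n : ENNReal) ≤ ENNReal.ofReal (exp ((lam - κ) * s ^ r - C)) := by
        rw [← ENNReal.ofReal_coe_nnreal]; exact ENNReal.ofReal_le_ofReal hsn
    _ = ENNReal.ofReal (exp (lam * s ^ r)) * ENNReal.ofReal (exp (-(κ * s ^ r) - C)) := by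
        rw [← ENNReal.ofReal_mul (exp_pos _).le, ← exp_add]; ring_nf
    _ ≤ ENNReal.ofReal (exp (lam * s ^ r)) * μ {ω | D s ω ≤ t} := by
        gcongr
        rw [← ofReal_measureReal]; exact ENNReal.ofReal_le_ofReal hs
    _ ≤ _ := ofReal_exp_mul_measure_le_lintegral_passageTime hD hmono hpass hlam hr.le hs0

end Laplace

lemma exists_pos_mul_rpow_mul_le {c κ : ℝ} (r : ℝ) (hcκ : c < κ) :
    ∃ δ, 0 < δ ∧ (1 + 2 * δ) * (1 + δ) ^ (r + 1) * c ≤ κ := by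
  have hcont : ContinuousAt (fun δ : ℝ => (1 + 2 * δ) * (1 + δ) ^ (r + 1) * c) 0 :=
    ((continuousAt_const.add (continuousAt_const.mul continuousAt_id)).mul
      ((continuousAt_const.add continuousAt_id).rpow_const (Or.inl (by norm_num)))).mul
      continuousAt_const
  have hlt : ∀ᶠ δ in 𝓝[>] 0, (1 + 2 * δ) * (1 + δ) ^ (r + 1) * c < κ :=
    nhdsWithin_le_nhds (hcont.eventually_lt continuousAt_const (by simpa using hcκ))
  obtain ⟨δ, hδ, hδ0⟩ := (hlt.and self_mem_nhdsWithin).exists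
  exact ⟨δ, hδ0, hδ.le⟩

namespace IsLevyMeasure

variable {ν : Measure ℝ} (hν : IsLevyMeasure ν)
variable {Ω : Type*} [MeasurableSpace Ω] {μ : Measure Ω} [IsFiniteMeasure μ]
include hν

-- Tilt at `W = (1 + δ) w`: with `θ = δ W` and `a = s g(W + θ) - log 4 / θ` the lower piece is at
-- most a quarter of `e^{-s ψ(W)}`, and `hwt` makes the upper piece at most a half.
lemma exp_neg_tangentIntercept_le_measureReal_le {X : Ω → ℝ} (hX : Measurable X) {s : ℝ}
    (hs : 0 < s)
    (hlap : ∀ z, 0 < z → ∫ ω, exp (-(z * X ω)) ∂μ = exp (-(s * laplaceExponent ν z)))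
    {δ w t : ℝ} (hδ : 0 < δ) (hw : 0 < w) (hwt : (1 + δ) * log 2 ≤ δ ^ 2 * t * w)
    (hg : (1 + δ) * s * laplaceExponentDeriv ν w ≤ t) :
    exp (-((1 + 2 * δ) * (1 + δ) ^ 2 * (s * tangentIntercept ν w)) - log 4 / δ - log 4) ≤
      μ.real {ω | X ω ≤ t} := by
  set W := (1 + δ) * w with hW
  set θ := δ * W with hθ
  set a := s * laplaceExponentDeriv ν (W + θ) - log 4 / θ with ha
  have hWpos : 0 < W := by positivity
  have hθpos : 0 < θ := by positivity
  have hlow : θ * a ≤ s * laplaceExponent ν (W + θ) - s * laplaceExponent ν W - log 4 := by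
    have hΨ := hν.le_laplaceExponent_sub hWpos (le_add_of_nonneg_right hθpos.le)
    rw [add_sub_cancel_left] at hΨ
    have hθa : θ * a = s * (θ * laplaceExponentDeriv ν (W + θ)) - log 4 := by
      rw [ha]; field_simp
    nlinarith
  have hhigh : s * laplaceExponent ν W - s * laplaceExponent ν w ≤ (W - w) * t - log 2 := by
    have hΨ := hν.laplaceExponent_sub_le hw (show w ≤ W by nlinarith)
    have hWw : W - w = δ * w := by ring
    rw [hWw] at hΨ ⊢
    have : (1 + δ) * (s * laplaceExponent ν W - s * laplaceExponent ν w) ≤ δ * w * t :=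
      calc (1 + δ) * (s * laplaceExponent ν W - s * laplaceExponent ν w)
          ≤ (1 + δ) * (s * (δ * w * laplaceExponentDeriv ν w)) := by rw [← mul_sub]; gcongr
        _ = δ * w * ((1 + δ) * s * laplaceExponentDeriv ν w) := by ring
        _ ≤ δ * w * t := by gcongr
    nlinarith
  have hexp : -((1 + 2 * δ) * (1 + δ) ^ 2 * (s * tangentIntercept ν w)) - log 4 / δ ≤
      W * a - s * laplaceExponent ν W := by
    have hWa : W * a = s * (W * laplaceExponentDeriv ν (W + θ)) - log 4 / δ := by
      rw [ha, hθ]; field_simp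
    have hΨW : laplaceExponent ν W = tangentIntercept ν W + W * laplaceExponentDeriv ν W := by
      rw [hν.tangentIntercept_eq hWpos]; ring
    have hgdiff : W * (laplaceExponentDeriv ν W - laplaceExponentDeriv ν (W + θ)) ≤
        2 * δ * tangentIntercept ν W :=
      calc W * (laplaceExponentDeriv ν W - laplaceExponentDeriv ν (W + θ))
          ≤ W * (2 * θ / W ^ 2 * tangentIntercept ν W) := by
            gcongr; exact hν.laplaceExponentDeriv_sub_le hWpos hθpos.le
        _ = 2 * δ * tangentIntercept ν W := by rw [hθ]; field_simp
    have hRW : tangentIntercept ν W ≤ (1 + δ) ^ 2 * tangentIntercept ν w :=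
      hν.tangentIntercept_mul_le (by linarith) hw
    have h1 := mul_le_mul_of_nonneg_left hgdiff hs.le
    have h2 := mul_le_mul_of_nonneg_left hRW (by positivity : 0 ≤ (1 + 2 * δ) * s)
    rw [hWa, hΨW]
    linarith
  refine le_trans (exp_le_exp.2 (by linarith)) (exp_sub_log_four_le_measureReal_le hX
    (L := fun z => s * laplaceExponent ν z) hlap hw (by nlinarith) hθpos.le hlow hhigh)

lemma eventually_exp_le_measureReal_le (hν0 : ν (Ioi 0) ≠ 0) {D : ℝ → Ω → ℝ}
    (hD : ∀ u, Measurable (D u))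
    (hlap : ∀ u, 0 < u → ∀ z, 0 < z →
      ∫ ω, exp (-(z * D u ω)) ∂μ = exp (-(u * laplaceExponent ν z)))
    {t c κ r M : ℝ} (ht : 0 < t) (hM : 0 < M) (hcκ : c < κ) {w : ℝ → ℝ}
    (hw : ∀ σ, M ≤ σ → 0 < w σ ∧ σ * laplaceExponentDeriv ν (w σ) < t ∧
      tangentIntercept ν (w σ) ≤ c * σ ^ (r - 1)) :
    ∃ C, ∀ᶠ s in atTop, exp (-(κ * s ^ r) - C) ≤ μ.real {ω | D s ω ≤ t} := by
  obtain ⟨δ, hδ, hδκ⟩ := exists_pos_mul_rpow_mul_le r hcκ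
  set X₀ := (1 + δ) * log 2 / (δ ^ 2 * t)
  have hgX₀ : 0 < laplaceExponentDeriv ν X₀ :=
    hν.laplaceExponentDeriv_pos hν0 (by positivity)
  refine ⟨log 4 / δ + log 4, ?_⟩
  filter_upwards [eventually_ge_atTop M, eventually_ge_atTop (t / laplaceExponentDeriv ν X₀)]
    with s hsM hsX
  have hs : 0 < s := hM.trans_le hsM
  obtain ⟨hw0, hwg, hwR⟩ := hw ((1 + δ) * s) (by nlinarith)
  set v := w ((1 + δ) * s)
  -- `σ g(v) < t` with `σ ≥ s ≥ t / g(X₀)` forces `g(v) < g(X₀)`, so `v > X₀`.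
  have hlarge : X₀ ≤ v := by
    by_contra! hlt
    have hg := hν.antitoneOn_laplaceExponentDeriv hw0 (hw0.trans hlt) hlt.le
    rw [div_le_iff₀ hgX₀] at hsX
    have := mul_le_mul_of_nonneg_left hg hs.le
    have := hν.laplaceExponentDeriv_pos hν0 hw0
    nlinarith
  have hwt : (1 + δ) * log 2 ≤ δ ^ 2 * t * v := by
    rw [div_le_iff₀ (by positivity)] at hlarge
    linarith
  refine le_trans (exp_le_exp.2 ?_) (hν.exp_neg_tangentIntercept_le_measureReal_le (hD s) hs
    (hlap s hs) hδ hw0 hwt (by linarith))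
  have hrpow : (1 + δ) ^ 2 * (s * ((1 + δ) * s) ^ (r - 1)) = (1 + δ) ^ (r + 1) * s ^ r := by
    rw [mul_rpow (by positivity) hs.le, rpow_sub_one hs.ne',
      show r + 1 = (r - 1) + (2 : ℕ) by push_cast; ring, rpow_add (by positivity), rpow_natCast]
    field_simp
  have : (1 + 2 * δ) * (1 + δ) ^ 2 * (s * tangentIntercept ν v) ≤ κ * s ^ r :=
    calc (1 + 2 * δ) * (1 + δ) ^ 2 * (s * tangentIntercept ν v)
        ≤ (1 + 2 * δ) * (1 + δ) ^ 2 * (s * (c * ((1 + δ) * s) ^ (r - 1))) := by gcongr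
      _ = (1 + 2 * δ) * c * ((1 + δ) ^ 2 * (s * ((1 + δ) * s) ^ (r - 1))) := by ring
      _ = (1 + 2 * δ) * (1 + δ) ^ (r + 1) * c * s ^ r := by rw [hrpow]; ring
      _ ≤ κ * s ^ r := by gcongr
  linarith

end IsLevyMeasure

theorem exp_moment_inverse_subordinator_infinite_of_tail_criterion_general
    {Ω : Type*} [MeasurableSpace Ω] (P : Measure Ω) [IsProbabilityMeasure P]
    (D : ℝ → Ω → ℝ) (ν : Measure ℝ) (ψ : ℝ → ℝ) (lam t r : ℝ)
    (hDmeas : ∀ u, Measurable (D u))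
    (hDmono : ∀ ω, MonotoneOn (fun u => D u ω) (Set.Ici 0))
    (hν : ∫⁻ y in Set.Ioi (0 : ℝ), ENNReal.ofReal (min y 1) ∂ν < ⊤)
    (hνinf : ν (Set.Ioi (0 : ℝ)) = ⊤)
    (hψ : ∀ s, 0 < s → ψ s = ∫ y in Set.Ioi (0 : ℝ), (1 - Real.exp (-(s * y))) ∂ν)
    (hlaplace : ∀ s, 0 < s → ∀ u, 0 ≤ u →
      ∫ ω, Real.exp (-(s * D u ω)) ∂P = Real.exp (-(u * ψ s)))
    (hlam : 0 < lam) (ht : 0 < t) (hr : 0 < r)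
    (ε M : ℝ) (x xinv : ℝ → ℝ) (hε : 0 < ε) (hM : 0 < M)
    (hxrange : ∀ s, M ≤ s → 0 < xinv s ∧ deriv ψ (xinv s) = x s)
    (hxt : ∀ s, M ≤ s → s * x s < t)
    (hxR : ∀ s, M ≤ s →
      (ψ (xinv s) - xinv s * deriv ψ (xinv s)) / s ^ (r - 1) ≤ lam - ε) :
    ∫⁻ ω, ENNReal.ofReal (Real.exp (lam * (sInf {u : ℝ | 0 < u ∧ t < D u ω}) ^ r)) ∂P = ⊤ := by
  have hlevy : IsLevyMeasure ν := hν
  have hν0 : ν (Ioi 0) ≠ 0 := by simp [hνinf]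
  have hψ' : ∀ z, 0 < z → ψ z = laplaceExponent ν z := hψ
  have hderiv (z : ℝ) (hz : 0 < z) : deriv ψ z = laplaceExponentDeriv ν z :=
    ((hlevy.hasDerivAt_laplaceExponent hz).congr_of_eventuallyEq
      (eventually_of_mem (Ioi_mem_nhds hz) hψ')).deriv
  have hlap (u : ℝ) (hu : 0 < u) (z : ℝ) (hz : 0 < z) :
      ∫ ω, exp (-(z * D u ω)) ∂P = exp (-(u * laplaceExponent ν z)) := by
    rw [hlaplace z hz u hu.le, hψ' z hz]
  have hcriterion (σ : ℝ) (hσ : M ≤ σ) : 0 < xinv σ ∧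
      σ * laplaceExponentDeriv ν (xinv σ) < t ∧
      tangentIntercept ν (xinv σ) ≤ (lam - ε) * σ ^ (r - 1) := by
    obtain ⟨hpos, hx⟩ := hxrange σ hσ
    refine ⟨hpos, by rw [← hderiv _ hpos, hx]; exact hxt σ hσ, ?_⟩
    have := hxR σ hσ
    rwa [hψ' _ hpos, hderiv _ hpos, ← hlevy.tangentIntercept_eq hpos,
      div_le_iff₀ (rpow_pos_of_pos (hM.trans_le hσ) _)] at this
  obtain ⟨C, hC⟩ := hlevy.eventually_exp_le_measureReal_le hν0 hDmeas hlap ht hM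
    (show lam - ε < lam - ε / 2 by linarith) hcriterion
  exact lintegral_exp_passageTime_eq_top hDmeas hDmono
    (ae_exists_lt_of_laplace one_pos (hlevy.laplaceExponent_pos hν0 one_pos)
      (fun u hu => hlap u hu 1 one_pos) t)
    hlam.le hr (show lam - ε / 2 < lam by linarith) hC

/-- Let `D` be a subordinator with infinite Lévy measure `ν` and Laplace
exponent `ψ`, let `E_t = inf {u > 0 : D_u > t}` be its inverse, and set `g = ψ'`,
`R s = ψ s - s ψ' s`.  Fix `λ > 0`, `t > 0`, `r > 0`.  If there exist `ε ∈ (0, λ)`, `M > 0`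
and a decreasing function `x : [M,∞) → (g(∞), g(0+))` (encoded by a positive preimage
function `xinv` with `g (xinv s) = x s`) such that `s * x s < t` and
`R (g⁻¹ (x s)) / s ^ (r-1) ≤ λ - ε` for all `s ≥ M`, then `E[exp (λ E_t ^ r)] = ∞`. -/
theorem exp_moment_inverse_subordinator_infinite_of_tail_criterion
    {Ω : Type*} [MeasurableSpace Ω] (P : Measure Ω) [IsProbabilityMeasure P]
    (D : ℝ → Ω → ℝ) (ν : Measure ℝ) (ψ : ℝ → ℝ) (lam t r : ℝ)
    (hDmeas : ∀ u, Measurable (D u))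
    (hD0 : ∀ ω, D 0 ω = 0)
    (hDmono : ∀ ω, MonotoneOn (fun u => D u ω) (Set.Ici 0))
    (hDrc : ∀ ω, ∀ u, 0 ≤ u → ContinuousWithinAt (fun v => D v ω) (Set.Ici u) u)
    (hstat : ∀ s u : ℝ, 0 ≤ s → 0 ≤ u →
      Measure.map (fun ω => D (s + u) ω - D s ω) P = Measure.map (D u) P)
    (hindep : ∀ (n : ℕ) (τ : Fin (n + 1) → ℝ), (∀ i, 0 ≤ τ i) → Monotone τ →
      ProbabilityTheory.iIndepFun
        (fun i : Fin n => fun ω => D (τ i.succ) ω - D (τ i.castSucc) ω) P)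
    (hν : ∫⁻ y in Set.Ioi (0 : ℝ), ENNReal.ofReal (min y 1) ∂ν < ⊤)
    (hνinf : ν (Set.Ioi (0 : ℝ)) = ⊤)
    (hψ : ∀ s, 0 < s → ψ s = ∫ y in Set.Ioi (0 : ℝ), (1 - Real.exp (-(s * y))) ∂ν)
    (hlaplace : ∀ s, 0 < s → ∀ u, 0 ≤ u →
      ∫ ω, Real.exp (-(s * D u ω)) ∂P = Real.exp (-(u * ψ s)))
    (hlam : 0 < lam) (ht : 0 < t) (hr : 0 < r)
    (ε M : ℝ) (x xinv : ℝ → ℝ) (hε : 0 < ε) (hεlam : ε < lam) (hM : 0 < M)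
    (hxrange : ∀ s, M ≤ s → 0 < xinv s ∧ deriv ψ (xinv s) = x s)
    (hxanti : ∀ s₁ s₂, M ≤ s₁ → s₁ ≤ s₂ → x s₂ ≤ x s₁)
    (hxt : ∀ s, M ≤ s → s * x s < t)
    (hxR : ∀ s, M ≤ s →
      (ψ (xinv s) - xinv s * deriv ψ (xinv s)) / s ^ (r - 1) ≤ lam - ε) :
    ∫⁻ ω, ENNReal.ofReal (Real.exp (lam * (sInf {u : ℝ | 0 < u ∧ t < D u ω}) ^ r)) ∂P = ⊤ :=
  exp_moment_inverse_subordinator_infinite_of_tail_criterion_general P D ν ψ lam t r hDmeas hDmono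
    hν hνinf hψ hlaplace hlam ht hr ε M x xinv hε hM hxrange hxt hxR
end

section
/- Let ψ : (0,∞) → (0,∞) be a Bernstein function (ψ ∈ C^∞(0,∞), ψ > 0 and (−1)^n ψ^{(n)} < 0 for all n ≥ 1) with lim_{s→∞} ψ(s) = ∞, and suppose ψ is regularly varying at ∞ with index β ∈ (0,1). Then the function R(s) := ψ(s) − s ψ'(s) is regularly varying at ∞ with index β; moreover, writing R'(s) = s(−ψ''(s)) = s^{β−1} ℓ(s) with ℓ slowly varying, one has R(s) ~ s^β ℓ(s)/β as s → ∞. -/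
open Filter Topology Set


private lemma slope_tendsto (γ : ℝ) :
    Tendsto (fun c : ℝ => (c ^ γ - 1) / (c - 1)) (𝓝[≠] (1:ℝ)) (𝓝 γ) := by
  have h : HasDerivAt (fun x : ℝ => x ^ γ) (γ * (1:ℝ) ^ (γ - 1)) 1 :=
    Real.hasDerivAt_rpow_const (Or.inl one_ne_zero)
  have h2 := hasDerivAt_iff_tendsto_slope.1 h
  rw [Real.one_rpow, mul_one] at h2
  refine h2.congr fun c => ?_
  simp [slope_def_field, Real.one_rpow]

private lemma monotone_density (f f' : ℝ → ℝ) (γ : ℝ)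
    (hf : ∀ s : ℝ, 0 < s → 0 < f s)
    (hd : ∀ s : ℝ, 0 < s → HasDerivAt f (f' s) s)
    (hm : AntitoneOn f' (Set.Ioi 0) ∨ MonotoneOn f' (Set.Ioi 0))
    (hRV : ∀ c : ℝ, 0 < c → Tendsto (fun s => f (c * s) / f s) atTop (𝓝 (c ^ γ))) :
    Tendsto (fun s => s * f' s / f s) atTop (𝓝 γ) := by
  have cont : ∀ a b : ℝ, 0 < a → ContinuousOn f (Icc a b) := fun a b ha x hx =>
    ((hd x (lt_of_lt_of_le ha hx.1)).continuousAt).continuousWithinAt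
  have mvt_gt : ∀ c s : ℝ, 1 < c → 0 < s →
      ∃ ξ ∈ Ioo s (c*s), f' ξ = (f (c*s) - f s) / (c*s - s) := by
    intro c s hc hs
    have hlt : s < c * s := by nlinarith
    exact exists_hasDerivAt_eq_slope f f' hlt (cont s (c*s) hs)
      (fun x hx => hd x (hs.trans hx.1))
  have mvt_lt : ∀ c s : ℝ, 0 < c → c < 1 → 0 < s →
      ∃ ξ ∈ Ioo (c*s) s, f' ξ = (f (c*s) - f s) / (c*s - s) := by
    intro c s hc0 hc hs
    have hlt : c * s < s := by nlinarith
    obtain ⟨ξ, hξ, hval⟩ := exists_hasDerivAt_eq_slope f f' hlt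
      (cont (c*s) s (by positivity)) (fun x hx => hd x ((by positivity : (0:ℝ) < c*s).trans hx.1))
    refine ⟨ξ, hξ, ?_⟩
    rw [hval, ← neg_sub (f (c*s)) (f s), ← neg_sub (c*s) s, neg_div_neg_eq]
  have algebra : ∀ c s : ℝ, c ≠ 1 → 0 < s →
      (f (c*s) / f s - 1) / (c-1) = ((f (c*s) - f s) / (c*s - s)) * (s / f s) := by
    intro c s hc hs
    have hB := (hf s hs).ne'
    have hc' : c - 1 ≠ 0 := sub_ne_zero.2 hc
    have h1 : c*s - s = (c-1)*s := by ring
    rw [h1]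
    field_simp
  have bndA : AntitoneOn f' (Set.Ioi 0) → ∀ c s : ℝ, 1 < c → 0 < s →
      (f (c*s) / f s - 1) / (c-1) ≤ s * f' s / f s := by
    intro hA c s hc hs
    obtain ⟨ξ, hξ, hval⟩ := mvt_gt c s hc hs
    have hle : f' ξ ≤ f' s := hA (mem_Ioi.2 hs) (mem_Ioi.2 (hs.trans hξ.1)) hξ.1.le
    have hnn : 0 ≤ s / f s := by have := hf s hs; positivity
    rw [algebra c s hc.ne' hs, ← hval]
    calc f' ξ * (s / f s) ≤ f' s * (s / f s) := mul_le_mul_of_nonneg_right hle hnn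
      _ = s * f' s / f s := by ring
  have bndA' : AntitoneOn f' (Set.Ioi 0) → ∀ c s : ℝ, 0 < c → c < 1 → 0 < s →
      s * f' s / f s ≤ (f (c*s) / f s - 1) / (c-1) := by
    intro hA c s hc0 hc hs
    obtain ⟨ξ, hξ, hval⟩ := mvt_lt c s hc0 hc hs
    have hle : f' s ≤ f' ξ := hA (mem_Ioi.2 ((by positivity : (0:ℝ) < c*s).trans hξ.1))
      (mem_Ioi.2 hs) hξ.2.le
    have hnn : 0 ≤ s / f s := by have := hf s hs; positivity
    rw [algebra c s hc.ne hs, ← hval]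
    calc s * f' s / f s = f' s * (s / f s) := by ring
      _ ≤ f' ξ * (s / f s) := mul_le_mul_of_nonneg_right hle hnn
  have bndM : MonotoneOn f' (Set.Ioi 0) → ∀ c s : ℝ, 1 < c → 0 < s →
      s * f' s / f s ≤ (f (c*s) / f s - 1) / (c-1) := by
    intro hM c s hc hs
    obtain ⟨ξ, hξ, hval⟩ := mvt_gt c s hc hs
    have hle : f' s ≤ f' ξ := hM (mem_Ioi.2 hs) (mem_Ioi.2 (hs.trans hξ.1)) hξ.1.le
    have hnn : 0 ≤ s / f s := by have := hf s hs; positivity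
    rw [algebra c s hc.ne' hs, ← hval]
    calc s * f' s / f s = f' s * (s / f s) := by ring
      _ ≤ f' ξ * (s / f s) := mul_le_mul_of_nonneg_right hle hnn
  have bndM' : MonotoneOn f' (Set.Ioi 0) → ∀ c s : ℝ, 0 < c → c < 1 → 0 < s →
      (f (c*s) / f s - 1) / (c-1) ≤ s * f' s / f s := by
    intro hM c s hc0 hc hs
    obtain ⟨ξ, hξ, hval⟩ := mvt_lt c s hc0 hc hs
    have hle : f' ξ ≤ f' s := hM (mem_Ioi.2 ((by positivity : (0:ℝ) < c*s).trans hξ.1))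
      (mem_Ioi.2 hs) hξ.2.le
    have hnn : 0 ≤ s / f s := by have := hf s hs; positivity
    rw [algebra c s hc.ne hs, ← hval]
    calc f' ξ * (s / f s) ≤ f' s * (s / f s) := mul_le_mul_of_nonneg_right hle hnn
      _ = s * f' s / f s := by ring
  have hslope : ∀ c : ℝ, 0 < c →
      Tendsto (fun s => (f (c*s) / f s - 1) / (c-1)) atTop (𝓝 ((c ^ γ - 1)/(c-1))) :=
    fun c hc => ((hRV c hc).sub_const 1).div_const _
  have hsub_gt : Ioi (1:ℝ) ⊆ {(1:ℝ)}ᶜ := fun y hy => hy.ne'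
  have hsub_lt : Iio (1:ℝ) ⊆ {(1:ℝ)}ᶜ := fun y hy => hy.ne
  rw [tendsto_order]
  constructor
  · intro x hx
    have h1 : ∀ᶠ c in 𝓝[≠] (1:ℝ), x < (c ^ γ - 1)/(c-1) :=
      (slope_tendsto γ).eventually (eventually_gt_nhds hx)
    rcases hm with hA | hM
    · have h2 : ∀ᶠ c in 𝓝[>] (1:ℝ), x < (c ^ γ - 1)/(c-1) :=
        h1.filter_mono (nhdsWithin_mono 1 hsub_gt)
      obtain ⟨c, hcx, hc1⟩ := (h2.and self_mem_nhdsWithin).exists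
      filter_upwards [(hslope c (zero_lt_one.trans hc1)).eventually (eventually_gt_nhds hcx),
        eventually_gt_atTop 0] with s hs1 hs2
      exact lt_of_lt_of_le hs1 (bndA hA c s hc1 hs2)
    · have h2 : ∀ᶠ c in 𝓝[<] (1:ℝ), x < (c ^ γ - 1)/(c-1) :=
        h1.filter_mono (nhdsWithin_mono 1 hsub_lt)
      have h3 : ∀ᶠ c in 𝓝[<] (1:ℝ), (0:ℝ) < c :=
        (eventually_gt_nhds zero_lt_one).filter_mono nhdsWithin_le_nhds
      obtain ⟨c, ⟨hcx, hc0⟩, hc1⟩ := ((h2.and h3).and self_mem_nhdsWithin).exists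
      filter_upwards [(hslope c hc0).eventually (eventually_gt_nhds hcx),
        eventually_gt_atTop 0] with s hs1 hs2
      exact lt_of_lt_of_le hs1 (bndM' hM c s hc0 hc1 hs2)
  · intro x hx
    have h1 : ∀ᶠ c in 𝓝[≠] (1:ℝ), (c ^ γ - 1)/(c-1) < x :=
      (slope_tendsto γ).eventually (eventually_lt_nhds hx)
    rcases hm with hA | hM
    · have h2 : ∀ᶠ c in 𝓝[<] (1:ℝ), (c ^ γ - 1)/(c-1) < x :=
        h1.filter_mono (nhdsWithin_mono 1 hsub_lt)
      have h3 : ∀ᶠ c in 𝓝[<] (1:ℝ), (0:ℝ) < c :=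
        (eventually_gt_nhds zero_lt_one).filter_mono nhdsWithin_le_nhds
      obtain ⟨c, ⟨hcx, hc0⟩, hc1⟩ := ((h2.and h3).and self_mem_nhdsWithin).exists
      filter_upwards [(hslope c hc0).eventually (eventually_lt_nhds hcx),
        eventually_gt_atTop 0] with s hs1 hs2
      exact lt_of_le_of_lt (bndA' hA c s hc0 hc1 hs2) hs1
    · have h2 : ∀ᶠ c in 𝓝[>] (1:ℝ), (c ^ γ - 1)/(c-1) < x :=
        h1.filter_mono (nhdsWithin_mono 1 hsub_gt)
      obtain ⟨c, hcx, hc1⟩ := (h2.and self_mem_nhdsWithin).exists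
      filter_upwards [(hslope c (zero_lt_one.trans hc1)).eventually (eventually_lt_nhds hcx),
        eventually_gt_atTop 0] with s hs1 hs2
      exact lt_of_le_of_lt (bndM hM c s hc1 hs2) hs1


/-- Let `ψ : (0,∞) → (0,∞)` be a Bernstein function with `ψ s → ∞`,
regularly varying at `∞` with index `β ∈ (0,1)`.  Then `R s := ψ s - s ψ' s` is regularly
varying at `∞` with index `β`; moreover, writing `R' s = s (-ψ'' s) = s ^ (β-1) ℓ s` with
`ℓ s := s ^ (2-β) (-ψ'' s)` slowly varying, one has `R s ~ s ^ β ℓ s / β` as `s → ∞`. -/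
theorem R_regularlyVarying_of_bernstein
    (ψ : ℝ → ℝ) (β : ℝ)
    (hsmooth : ContDiffOn ℝ (⊤ : ℕ∞) ψ (Set.Ioi 0))
    (hpos : ∀ s, 0 < s → 0 < ψ s)
    (hsign : ∀ n : ℕ, 1 ≤ n → ∀ s, 0 < s → (-1 : ℝ) ^ n * iteratedDeriv n ψ s < 0)
    (htop : Tendsto ψ atTop atTop)
    (hβ0 : 0 < β) (hβ1 : β < 1)
    (hRV : ∀ c, 0 < c → Tendsto (fun s => ψ (c * s) / ψ s) atTop (𝓝 (c ^ β))) :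
    (∀ s, 0 < s → deriv (fun u => ψ u - u * deriv ψ u) s
        = s ^ (β - 1) * (s ^ (2 - β) * (-(iteratedDeriv 2 ψ s)))) ∧
    (∀ c, 0 < c → Tendsto
      (fun s => ((c * s) ^ (2 - β) * (-(iteratedDeriv 2 ψ (c * s))))
        / (s ^ (2 - β) * (-(iteratedDeriv 2 ψ s)))) atTop (𝓝 1)) ∧
    Tendsto (fun s => (ψ s - s * deriv ψ s)
      / (s ^ β * (s ^ (2 - β) * (-(iteratedDeriv 2 ψ s))) / β)) atTop (𝓝 1) ∧
    (∀ c, 0 < c → Tendsto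
      (fun s => (ψ (c * s) - (c * s) * deriv ψ (c * s)) / (ψ s - s * deriv ψ s))
      atTop (𝓝 (c ^ β))) := by
  have hOpen : IsOpen (Ioi (0:ℝ)) := isOpen_Ioi
  have hsm1 : ContDiffOn ℝ (⊤ : ℕ∞) (deriv ψ) (Ioi 0) :=
    hsmooth.deriv_of_isOpen hOpen (by simp)
  have hsm2 : ContDiffOn ℝ (⊤ : ℕ∞) (deriv (deriv ψ)) (Ioi 0) :=
    hsm1.deriv_of_isOpen hOpen (by simp)
  have hda : ∀ s : ℝ, 0 < s → HasDerivAt ψ (deriv ψ s) s := fun s hs =>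
    ((hsmooth.contDiffAt (hOpen.mem_nhds hs)).differentiableAt (by simp)).hasDerivAt
  have hda1 : ∀ s : ℝ, 0 < s → HasDerivAt (deriv ψ) (deriv (deriv ψ) s) s := fun s hs =>
    ((hsm1.contDiffAt (hOpen.mem_nhds hs)).differentiableAt (by simp)).hasDerivAt
  have h2eq : iteratedDeriv 2 ψ = deriv (deriv ψ) := by
    rw [iteratedDeriv_succ, iteratedDeriv_one]
  have h3eq : iteratedDeriv 3 ψ = deriv (deriv (deriv ψ)) := by
    rw [iteratedDeriv_succ, iteratedDeriv_succ, iteratedDeriv_one]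
  have hd1pos : ∀ s : ℝ, 0 < s → 0 < deriv ψ s := by
    intro s hs
    have := hsign 1 le_rfl s hs
    rw [iteratedDeriv_one] at this
    norm_num at this
    linarith
  have hd2neg : ∀ s : ℝ, 0 < s → deriv (deriv ψ) s < 0 := by
    intro s hs
    have := hsign 2 (by norm_num) s hs
    rw [h2eq] at this
    norm_num at this
    linarith
  have hd3pos : ∀ s : ℝ, 0 < s → 0 < deriv (deriv (deriv ψ)) s := by
    intro s hs
    have := hsign 3 (by norm_num) s hs
    rw [h3eq] at this
    norm_num at this
    linarith
  have hAnti : AntitoneOn (deriv ψ) (Ioi 0) := by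
    refine (strictAntiOn_of_deriv_neg (convex_Ioi 0) hsm1.continuousOn ?_).antitoneOn
    intro x hx
    rw [interior_Ioi] at hx
    exact hd2neg x hx
  have hMono : MonotoneOn (deriv (deriv ψ)) (Ioi 0) := by
    refine (strictMonoOn_of_deriv_pos (convex_Ioi 0) hsm2.continuousOn ?_).monotoneOn
    intro x hx
    rw [interior_Ioi] at hx
    exact hd3pos x hx
  have hg1 : Tendsto (fun s => s * deriv ψ s / ψ s) atTop (𝓝 β) :=
    monotone_density ψ (deriv ψ) β hpos hda (Or.inl hAnti) hRV
  have hβ1' : β - 1 ≠ 0 := by linarith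
  -- regular variation of deriv ψ with index β - 1
  have hRV' : ∀ c : ℝ, 0 < c →
      Tendsto (fun s => deriv ψ (c * s) / deriv ψ s) atTop (𝓝 (c ^ (β - 1))) := by
    intro c hc
    have hmul : Tendsto (fun s : ℝ => c * s) atTop atTop :=
      Tendsto.const_mul_atTop hc tendsto_id
    have hcomp : Tendsto (fun s => (c * s) * deriv ψ (c * s) / ψ (c * s)) atTop (𝓝 β) :=
      hg1.comp hmul
    have hlim : Tendsto (fun s =>
        ((c * s) * deriv ψ (c * s) / ψ (c * s)) * (ψ (c * s) / ψ s)
          * (s * deriv ψ s / ψ s)⁻¹ * c⁻¹) atTop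
        (𝓝 (β * c ^ β * β⁻¹ * c⁻¹)) :=
      ((hcomp.mul (hRV c hc)).mul (hg1.inv₀ hβ0.ne')).mul_const _
    have hval : β * c ^ β * β⁻¹ * c⁻¹ = c ^ (β - 1) := by
      rw [Real.rpow_sub hc, Real.rpow_one]
      field_simp
    rw [hval] at hlim
    refine hlim.congr' ?_
    filter_upwards [eventually_gt_atTop 0] with s hs
    have hcs : (0:ℝ) < c * s := by positivity
    have h1 := (hpos s hs).ne'
    have h2 := (hpos _ hcs).ne'
    have h3 := (hd1pos s hs).ne'
    field_simp
  have hg2 : Tendsto (fun s => s * deriv (deriv ψ) s / deriv ψ s) atTop (𝓝 (β - 1)) :=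
    monotone_density (deriv ψ) (deriv (deriv ψ)) (β - 1) hd1pos hda1 (Or.inr hMono) hRV'
  refine ⟨?_, ?_, ?_, ?_⟩
  · -- Part 1
    intro s hs
    have h1 := hda s hs
    have h2 := hda1 s hs
    have hprod : HasDerivAt (fun u : ℝ => u * deriv ψ u)
        (1 * deriv ψ s + s * deriv (deriv ψ) s) s := (hasDerivAt_id s).mul h2
    have hR : HasDerivAt (fun u => ψ u - u * deriv ψ u)
        (deriv ψ s - (1 * deriv ψ s + s * deriv (deriv ψ) s)) s := h1.sub hprod
    rw [hR.deriv, h2eq]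
    have hpow : s ^ (β - 1) * s ^ (2 - β) = s := by
      rw [← Real.rpow_add hs]
      norm_num
    rw [show s ^ (β-1) * (s ^ (2-β) * (-(deriv (deriv ψ) s)))
        = (s ^ (β-1) * s ^ (2-β)) * (-(deriv (deriv ψ) s)) from by ring, hpow]
    ring
  · -- Part 2
    intro c hc
    simp only [h2eq]
    have hmul : Tendsto (fun s : ℝ => c * s) atTop atTop :=
      Tendsto.const_mul_atTop hc tendsto_id
    have hcomp : Tendsto (fun s => (c * s) * deriv (deriv ψ) (c * s) / deriv ψ (c * s))
        atTop (𝓝 (β - 1)) := hg2.comp hmul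
    have hlim : Tendsto (fun s =>
        c ^ (2 - β) * ((c * s) * deriv (deriv ψ) (c * s) / deriv ψ (c * s))
          * (deriv ψ (c * s) / deriv ψ s)
          * (s * deriv (deriv ψ) s / deriv ψ s)⁻¹ * c⁻¹) atTop
        (𝓝 (c ^ (2 - β) * (β - 1) * c ^ (β - 1) * (β - 1)⁻¹ * c⁻¹)) :=
      (((tendsto_const_nhds.mul hcomp).mul (hRV' c hc)).mul (hg2.inv₀ hβ1')).mul_const _
    have hval : c ^ (2 - β) * (β - 1) * c ^ (β - 1) * (β - 1)⁻¹ * c⁻¹ = 1 := by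
      rw [show (2 - β : ℝ) = -(β - 1) + 1 by ring, Real.rpow_add hc, Real.rpow_one,
        Real.rpow_neg hc.le]
      field_simp
    rw [hval] at hlim
    refine hlim.congr' ?_
    filter_upwards [eventually_gt_atTop 0] with s hs
    have hcs : (0:ℝ) < c * s := by positivity
    have h1 := (hd1pos s hs).ne'
    have h2 := (hd1pos _ hcs).ne'
    have h3 := (hd2neg s hs).ne
    have hrp : (c * s) ^ (2 - β) = c ^ (2 - β) * s ^ (2 - β) :=
      Real.mul_rpow hc.le hs.le
    have hsp : (0:ℝ) < s ^ (2 - β) := Real.rpow_pos_of_pos hs _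
    rw [hrp]
    field_simp
  · -- Part 3
    have h1β : (1 : ℝ) - β ≠ 0 := by linarith
    have hlim : Tendsto (fun s =>
        β * ((s * deriv ψ s / ψ s)⁻¹ - 1)
          * (-(s * deriv (deriv ψ) s / deriv ψ s))⁻¹) atTop
        (𝓝 (β * (β⁻¹ - 1) * (-(β - 1))⁻¹)) :=
      (tendsto_const_nhds.mul ((hg1.inv₀ hβ0.ne').sub_const 1)).mul
        (hg2.neg.inv₀ (neg_ne_zero.2 hβ1'))
    have hval : β * (β⁻¹ - 1) * (-(β - 1))⁻¹ = 1 := by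
      rw [show -(β - 1) = 1 - β by ring]
      field_simp
    rw [hval] at hlim
    simp only [h2eq]
    refine hlim.congr' ?_
    filter_upwards [eventually_gt_atTop 0] with s hs
    have h1 := (hpos s hs).ne'
    have h2 := (hd1pos s hs).ne'
    have h3 := (hd2neg s hs).ne
    have hpow : s ^ β * s ^ (2 - β) = s * s := by
      rw [← Real.rpow_add hs, show β + (2 - β) = (2:ℝ) by ring,
        show (2:ℝ) = ((2:ℕ):ℝ) by norm_num, Real.rpow_natCast]
      ring
    rw [show s ^ β * (s ^ (2-β) * (-(deriv (deriv ψ) s)))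
        = (s ^ β * s ^ (2-β)) * (-(deriv (deriv ψ) s)) from by ring, hpow]
    field_simp
  · -- Part 4
    have h1β : (0:ℝ) < 1 - β := by linarith
    have hRψ : Tendsto (fun s => (ψ s - s * deriv ψ s) / ψ s) atTop (𝓝 (1 - β)) := by
      have h := (tendsto_const_nhds (x := (1:ℝ)) (f := atTop)).sub hg1
      refine h.congr' ?_
      filter_upwards [eventually_gt_atTop 0] with s hs
      have h1 := (hpos s hs).ne'
      field_simp
    intro c hc
    have hmul : Tendsto (fun s : ℝ => c * s) atTop atTop :=
      Tendsto.const_mul_atTop hc tendsto_id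
    have hcomp : Tendsto (fun s => (ψ (c*s) - (c*s) * deriv ψ (c*s)) / ψ (c*s))
        atTop (𝓝 (1 - β)) := hRψ.comp hmul
    have hlim : Tendsto (fun s =>
        ((ψ (c*s) - (c*s) * deriv ψ (c*s)) / ψ (c*s)) * (ψ (c*s) / ψ s)
          * ((ψ s - s * deriv ψ s) / ψ s)⁻¹) atTop
        (𝓝 ((1 - β) * c ^ β * (1 - β)⁻¹)) :=
      (hcomp.mul (hRV c hc)).mul (hRψ.inv₀ h1β.ne')
    have hval : (1 - β) * c ^ β * (1 - β)⁻¹ = c ^ β := by field_simp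
    rw [hval] at hlim
    refine hlim.congr' ?_
    filter_upwards [eventually_gt_atTop 0,
      hRψ.eventually (eventually_gt_nhds h1β)] with s hs hRs
    have hcs : (0:ℝ) < c * s := by positivity
    have hψ := hpos s hs
    have h1 := hψ.ne'
    have h2 := (hpos _ hcs).ne'
    have hRpos : 0 < ψ s - s * deriv ψ s := by
      have heq : ψ s - s * deriv ψ s = ((ψ s - s * deriv ψ s) / ψ s) * ψ s := by
        field_simp
      rw [heq]
      exact mul_pos hRs hψ
    have h4 := hRpos.ne'
    field_simp
end

section
/- Fix r > 0 and β ∈ (0,1), and define a_n := Γ(rn+1)/(n! · Γ(rnβ+1)) for n ∈ ℕ, where Γ is the Gamma function. Then, as n → ∞: (i) if r < 1/(1−β), then a_{n+1}/a_n → 0; (ii) if r > 1/(1−β), then a_{n+1}/a_n → ∞; (iii) if r = 1/(1−β) (so r > 1), then a_{n+1}/a_n → r^r/(r−1)^{r−1}. -/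
/-!
Log-convexity of `Γ` gives Wendel's inequalities `x Γ(x) ≤ Γ(x + a) (x + a)^(1 - a)` and
`Γ(x + a) ≤ Γ(x) x^a` for `a ∈ [0, 1]`, hence `Γ(x + a) ~ Γ(x) x^a` as `x → ∞`, first for
`a ∈ [0, 1]` and then for every `a ≥ 0` by the functional equation. Applied with `a = r` and
`a = rβ` this gives `a_{n+1} / a_n ~ r^r / (rβ)^(rβ) · n^(r(1 - β) - 1)`, and the exponent is
negative, positive or zero according to the three cases.
-/

open Filter Topology Real Set Asymptotics

lemma isEquivalent_add_const_id (a : ℝ) : (fun x : ℝ => x + a) ~[atTop] id :=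
  IsEquivalent.refl.add_const_of_norm_tendsto_atTop (tendsto_norm_atTop_atTop.comp tendsto_id)

namespace Real

lemma Gamma_mul_add_mul_le_of_nonneg {s t a b : ℝ} (hs : 0 < s) (ht : 0 < t) (ha : 0 ≤ a)
    (hb : 0 ≤ b) (hab : a + b = 1) : Gamma (a * s + b * t) ≤ Gamma s ^ a * Gamma t ^ b := by
  have hconv := convexOn_log_Gamma.2 (mem_Ioi.2 hs) (mem_Ioi.2 ht) ha hb hab
  simp only [smul_eq_mul, Function.comp_apply] at hconv
  have hst : 0 < a * s + b * t := convex_Ioi (0 : ℝ) hs ht ha hb hab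
  have hΓs := Gamma_pos_of_pos hs
  have hΓt := Gamma_pos_of_pos ht
  rwa [← log_le_log_iff (Gamma_pos_of_pos hst) (by positivity),
    log_mul (by positivity) (by positivity), log_rpow hΓs, log_rpow hΓt]

lemma Gamma_add_le_Gamma_mul_rpow {a x : ℝ} (ha₀ : 0 ≤ a) (ha₁ : a ≤ 1) (hx : 0 < x) :
    Gamma (x + a) ≤ Gamma x * x ^ a := by
  have hΓ := Gamma_pos_of_pos hx
  calc Gamma (x + a) = Gamma ((1 - a) * x + a * (x + 1)) := by ring_nf
    _ ≤ Gamma x ^ (1 - a) * Gamma (x + 1) ^ a :=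
      Gamma_mul_add_mul_le_of_nonneg hx (by linarith) (by linarith) ha₀ (by ring)
    _ = Gamma x * x ^ a := by
      rw [Gamma_add_one hx.ne', mul_rpow hx.le hΓ.le, mul_left_comm, ← rpow_add hΓ,
        sub_add_cancel, rpow_one, mul_comm]

lemma Gamma_add_one_le_Gamma_add_mul_rpow {a x : ℝ} (ha₀ : 0 ≤ a) (ha₁ : a ≤ 1) (hx : 0 < x) :
    Gamma (x + 1) ≤ Gamma (x + a) * (x + a) ^ (1 - a) := by
  have hxa : 0 < x + a := by linarith
  have hΓ := Gamma_pos_of_pos hxa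
  calc Gamma (x + 1) = Gamma (a * (x + a) + (1 - a) * (x + a + 1)) := by ring_nf
    _ ≤ Gamma (x + a) ^ a * Gamma (x + a + 1) ^ (1 - a) :=
      Gamma_mul_add_mul_le_of_nonneg hxa (by linarith) ha₀ (by linarith) (by ring)
    _ = Gamma (x + a) * (x + a) ^ (1 - a) := by
      rw [Gamma_add_one hxa.ne', mul_rpow hxa.le hΓ.le, mul_left_comm, ← rpow_add hΓ,
        add_sub_cancel, rpow_one, mul_comm]

lemma Gamma_add_isEquivalent_of_le_one {a : ℝ} (ha₀ : 0 ≤ a) (ha₁ : a ≤ 1) :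
    (fun x => Gamma (x + a)) ~[atTop] fun x => Gamma x * x ^ a := by
  have hfrac : Tendsto (fun x : ℝ => x / (x + a)) atTop (𝓝 1) :=
    (isEquivalent_iff_tendsto_one ((eventually_gt_atTop (-a)).mono fun x hx => by linarith)).mp (isEquivalent_add_const_id a).symm
  have hlow := hfrac.rpow_const (p := 1 - a) (Or.inr (by linarith))
  rw [one_rpow] at hlow
  refine isEquivalent_of_tendsto_one
    (tendsto_of_tendsto_of_tendsto_of_le_of_le' hlow tendsto_const_nhds ?_ ?_)
  · filter_upwards [eventually_gt_atTop 0] with x hx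
    have hxa : 0 < x + a := by linarith
    have hΓ := Gamma_pos_of_pos hx
    have hbound := Gamma_add_one_le_Gamma_add_mul_rpow ha₀ ha₁ hx
    rw [Gamma_add_one hx.ne', mul_comm] at hbound
    rw [Pi.div_apply, div_rpow hx.le hxa.le, div_le_div_iff₀ (by positivity) (by positivity)]
    calc x ^ (1 - a) * (Gamma x * x ^ a) = Gamma x * x := by
          rw [mul_left_comm, ← rpow_add hx, sub_add_cancel, rpow_one]
      _ ≤ Gamma (x + a) * (x + a) ^ (1 - a) := hbound
  · filter_upwards [eventually_gt_atTop 0] with x hx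
    have hΓ := Gamma_pos_of_pos hx
    rw [Pi.div_apply, div_le_one (by positivity)]
    exact Gamma_add_le_Gamma_mul_rpow ha₀ ha₁ hx

lemma Gamma_add_isEquivalent_add_one {a : ℝ}
    (h : (fun x => Gamma (x + a)) ~[atTop] fun x => Gamma x * x ^ a) :
    (fun x => Gamma (x + (a + 1))) ~[atTop] fun x => Gamma x * x ^ (a + 1) := by
  refine (((isEquivalent_add_const_id a).mul h).congr_left ?_).congr_right ?_
  · filter_upwards [eventually_gt_atTop (-a)] with x hx
    simp only [Pi.mul_apply, ← add_assoc, Gamma_add_one (by linarith : x + a ≠ 0)]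
  · filter_upwards [eventually_gt_atTop 0] with x hx
    simp only [Pi.mul_apply, id, rpow_add_one hx.ne']
    ring

theorem Gamma_add_isEquivalent {a : ℝ} (ha : 0 ≤ a) :
    (fun x => Gamma (x + a)) ~[atTop] fun x => Gamma x * x ^ a := by
  have hfract : ∀ n : ℕ, (fun x => Gamma (x + (a - ⌊a⌋₊ + n))) ~[atTop]
      fun x => Gamma x * x ^ (a - ⌊a⌋₊ + n) := by
    intro n
    induction n with
    | zero =>
      simpa using Gamma_add_isEquivalent_of_le_one (sub_nonneg.2 (Nat.floor_le ha))
        (by linarith [Nat.lt_floor_add_one a])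
    | succ n ih => simpa [add_assoc] using Gamma_add_isEquivalent_add_one ih
  simpa using hfract ⌊a⌋₊

lemma Gamma_mul_succ_add_one_div_isEquivalent {b : ℝ} (hb : 0 < b) :
    (fun n : ℕ => Gamma (b * (n + 1) + 1) / Gamma (b * n + 1)) ~[atTop]
      fun n => b ^ b * (n : ℝ) ^ b := by
  have hbn : Tendsto (fun n : ℕ => b * n) atTop atTop :=
    tendsto_natCast_atTop_atTop.const_mul_atTop hb
  have hshift : (fun n : ℕ => Gamma (b * (n + 1) + 1)) ~[atTop]
      fun n => Gamma (b * n + 1) * (b * n + 1) ^ b := by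
    refine ((Gamma_add_isEquivalent hb.le).comp_tendsto
      (tendsto_atTop_add_const_right _ 1 hbn)).congr_left (Eventually.of_forall fun n => ?_)
    simp only [Function.comp_apply]
    ring_nf
  have hpow : (fun n : ℕ => (b * n + 1) ^ b) ~[atTop] fun n => (b * n) ^ b :=
    ((isEquivalent_add_const_id 1).comp_tendsto hbn).rpow fun n => mul_nonneg hb.le n.cast_nonneg
  refine ((hshift.div IsEquivalent.refl).congr_right (Eventually.of_forall fun n => ?_)).trans
    (hpow.congr_right (Eventually.of_forall fun n => ?_))
  · simp [(Gamma_pos_of_pos (by positivity : (0 : ℝ) < b * n + 1)).ne']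
  · exact mul_rpow hb.le n.cast_nonneg

end Real

lemma gamma_ratio_isEquivalent {r β : ℝ} (hr : 0 < r) (hβ : 0 < β) :
    (fun n : ℕ =>
        (Gamma (r * (n + 1) + 1) / ((n + 1).factorial * Gamma (r * (n + 1) * β + 1)))
          / (Gamma (r * n + 1) / (n.factorial * Gamma (r * n * β + 1)))) ~[atTop]
      fun n => r ^ r / (r * β) ^ (r * β) * (n : ℝ) ^ (r - r * β - 1) := by
  have hrβ : 0 < r * β := mul_pos hr hβ
  have hsucc : (fun n : ℕ => (n : ℝ) + 1) ~[atTop] fun n => (n : ℝ) :=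
    (isEquivalent_add_const_id 1).comp_tendsto tendsto_natCast_atTop_atTop
  refine (((Gamma_mul_succ_add_one_div_isEquivalent hr).div
    (hsucc.mul (Gamma_mul_succ_add_one_div_isEquivalent hrβ))).congr_left
      (Eventually.of_forall fun n => ?_)).congr_right ?_
  · have := Gamma_pos_of_pos (by positivity : (0 : ℝ) < r * n + 1)
    have := Gamma_pos_of_pos (by positivity : (0 : ℝ) < r * β * n + 1)
    have := Gamma_pos_of_pos (by positivity : (0 : ℝ) < r * β * (n + 1) + 1)
    simp only [Pi.div_apply, Pi.mul_apply, Nat.factorial_succ, Nat.cast_mul, Nat.cast_succ]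
    rw [show r * (n + 1) * β = r * β * (n + 1) by ring, show r * n * β = r * β * n by ring]
    field_simp
  · filter_upwards [eventually_gt_atTop 0] with n hn
    have hn' : (0 : ℝ) < n := by exact_mod_cast hn
    simp only [Pi.div_apply, Pi.mul_apply, sub_sub, rpow_sub hn', rpow_add hn', rpow_one]
    field_simp

/-- Fix `r > 0` and `β ∈ (0,1)`, and let
`a n = Γ(r n + 1) / (n! Γ(r n β + 1))`.  Then as `n → ∞`:
(i) if `r < 1/(1-β)` then `a (n+1) / a n → 0`;
(ii) if `r > 1/(1-β)` then `a (n+1) / a n → ∞`;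
(iii) if `r = 1/(1-β)` (so `r > 1`) then `a (n+1) / a n → r^r / (r-1)^(r-1)`. -/
theorem gamma_ratio_limits
    (r β : ℝ) (hr : 0 < r) (hβ0 : 0 < β) (hβ1 : β < 1) :
    (r < 1 / (1 - β) →
      Tendsto (fun n : ℕ =>
        (Real.Gamma (r * (n + 1) + 1) / ((n + 1).factorial * Real.Gamma (r * (n + 1) * β + 1)))
          / (Real.Gamma (r * n + 1) / (n.factorial * Real.Gamma (r * n * β + 1))))
        atTop (𝓝 0)) ∧
    (1 / (1 - β) < r →
      Tendsto (fun n : ℕ =>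
        (Real.Gamma (r * (n + 1) + 1) / ((n + 1).factorial * Real.Gamma (r * (n + 1) * β + 1)))
          / (Real.Gamma (r * n + 1) / (n.factorial * Real.Gamma (r * n * β + 1))))
        atTop atTop) ∧
    (r = 1 / (1 - β) →
      Tendsto (fun n : ℕ =>
        (Real.Gamma (r * (n + 1) + 1) / ((n + 1).factorial * Real.Gamma (r * (n + 1) * β + 1)))
          / (Real.Gamma (r * n + 1) / (n.factorial * Real.Gamma (r * n * β + 1))))
        atTop (𝓝 (r ^ r / (r - 1) ^ (r - 1)))) := by
  have hequiv := (gamma_ratio_isEquivalent hr hβ0).symm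
  have hL : 0 < r ^ r / (r * β) ^ (r * β) := by positivity
  have h1β : 0 < 1 - β := by linarith
  refine ⟨fun hcase => ?_, fun hcase => ?_, fun hcase => ?_⟩
  · have hs : 0 < -(r - r * β - 1) := by rw [lt_div_iff₀ h1β] at hcase; linarith
    have hpow := (tendsto_rpow_neg_atTop hs).comp tendsto_natCast_atTop_atTop
    simp only [neg_neg, Function.comp_def] at hpow
    simpa using hequiv.tendsto_nhds (hpow.const_mul (r ^ r / (r * β) ^ (r * β)))
  · have hs : 0 < r - r * β - 1 := by rw [div_lt_iff₀ h1β] at hcase; linarith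
    exact hequiv.tendsto_atTop
      (((tendsto_rpow_atTop hs).comp tendsto_natCast_atTop_atTop).const_mul_atTop hL)
  · have hrβ : r * β = r - 1 := by rw [eq_div_iff h1β.ne'] at hcase; linarith
    have hs : r - r * β - 1 = 0 := by linarith
    refine hequiv.tendsto_nhds (tendsto_const_nhds.congr fun n => ?_)
    rw [hs, rpow_zero, mul_one, hrβ]
end
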